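/- arXiv:math/0406353 — 8 statements merged into one kernel-verified Lean document; each statement's English description precedes it below -/
import Mathlib

section
/- There exists a universal constant C > 0 with the following property: for every real α > 1 and every finite metric space (X,d) with n ≥ 1 points, there exists a subset Y ⊆ X with |Y| ≥ n^(1 − C·log(2α)/α) together with an ultrametric ρ on Y satisfying d(x,y) ≤ ρ(x,y) ≤ α·d(x,y) for all x,y ∈ Y. -/
/-- `ρ` is an ultrametric on the subset `Y` of `X`. -/
def IsUltrametricOn {X : Type} (Y : Set X) (ρ : X → X → ℝ) : Prop :=
  (∀ x ∈ Y, ρ x x = 0) ∧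
  (∀ x ∈ Y, ∀ y ∈ Y, x ≠ y → 0 < ρ x y) ∧
  (∀ x ∈ Y, ∀ y ∈ Y, ρ x y = ρ y x) ∧
  (∀ x ∈ Y, ∀ y ∈ Y, ∀ z ∈ Y, ρ x z ≤ max (ρ x y) (ρ y z))

/-!
Random partitions in the style of Calinescu–Karloff–Rabani and Mendel–Naor. At scale `j`, with
step `s_j = s / 8 ^ j`, draw a uniformly random order `σ` of `X` and a radius index `a < N`, and
label every point by the `σ`-first point of its ball of radius `(N + a + 1) s_j`. Call `x` padded
if the first point of its ball of radius `(N + a + 2) s_j` lies within `(N + a) s_j` of `x`; then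
every point within `s_j` of `x` gets the label of `x`. By symmetry of the random order, for fixed
`a` the probability of being padded is `|B(x, (N + a) s_j)| / |B(x, (N + a + 2) s_j)|`, so by
AM–GM over `a` it is at least `(|B(x, N s_j)| / |B(x, (2N + 1) s_j)|) ^ (2 / N)`; these ratios
telescope along the scales, so with independent scales each point is padded at every scale with
probability at least `n ^ (-2 / N)`. Hence some sample has at least `n ^ (1 - 2 / N)` points padded
everywhere, and on them the distance `32 N s_j`, with `j` the first scale at which two labels
differ, is an ultrametric `32 N`-equivalent to `d`. Finally take `N = ⌊α / 32⌋`.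
-/

open Finset

namespace MetricRamsey

open scoped Classical

lemma isUltrametricOn_zero_of_subsingleton {X : Type} {Y : Set X} (hY : Y.Subsingleton) :
    IsUltrametricOn Y fun _ _ => 0 :=
  ⟨fun _ _ => rfl, fun _ hx _ hy hxy => absurd (hY hx hy) hxy, fun _ _ _ _ => rfl,
    fun _ _ _ _ _ _ => by simp⟩

section Hierarchy

variable {X : Type} {β : Type*} {J : ℕ} (f : Fin J → X → β)

noncomputable def agreeDepth (x y : X) : ℕ :=
  Nat.findGreatest (fun M => ∀ j : Fin J, (j : ℕ) < M → f j x = f j y) J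

/-- The labels need not refine each other from one level to the next: comparing points through
the first level at which they differ still gives an ultrametric. -/
noncomputable def hierarchyDist (D : ℕ → ℝ) (x y : X) : ℝ :=
  if x = y then 0 else D (agreeDepth f x y)

variable {f} {x y z : X}

lemma agreeDepth_le : agreeDepth f x y ≤ J := Nat.findGreatest_le J

lemma agreeDepth_comm (x y : X) : agreeDepth f x y = agreeDepth f y x := by
  simp only [agreeDepth, eq_comm]

lemma eq_of_lt_agreeDepth {j : Fin J} (h : (j : ℕ) < agreeDepth f x y) : f j x = f j y :=
  Nat.findGreatest_spec (P := fun M => ∀ j : Fin J, (j : ℕ) < M → f j x = f j y)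
    (Nat.zero_le J) (fun _ h => absurd h (Nat.not_lt_zero _)) j h

lemma min_agreeDepth_le : min (agreeDepth f x y) (agreeDepth f y z) ≤ agreeDepth f x z :=
  Nat.le_findGreatest ((min_le_left _ _).trans agreeDepth_le) fun _ hj =>
    (eq_of_lt_agreeDepth (hj.trans_le (min_le_left _ _))).trans
      (eq_of_lt_agreeDepth (hj.trans_le (min_le_right _ _)))

lemma agreeDepth_lt_of_ne {j : Fin J} (h : f j x ≠ f j y) : agreeDepth f x y < J := by
  refine agreeDepth_le.lt_of_ne fun hJ => h (eq_of_lt_agreeDepth ?_)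
  rw [hJ]
  exact j.isLt

lemma ne_at_agreeDepth (h : agreeDepth f x y < J) : f ⟨_, h⟩ x ≠ f ⟨_, h⟩ y := fun he =>
  Nat.findGreatest_is_greatest (Nat.lt_succ_self _) h fun j hj =>
    (Nat.lt_succ_iff.mp hj).lt_or_eq.elim eq_of_lt_agreeDepth fun hj => by
      convert he using 2 <;> exact Fin.ext hj

variable {D : ℕ → ℝ}

theorem isUltrametricOn_hierarchyDist (hD : Antitone D) (hD_pos : ∀ j, 0 < D j) (Y : Set X) :
    IsUltrametricOn Y (hierarchyDist f D) := by
  have nonneg (x y : X) : 0 ≤ hierarchyDist f D x y := by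
    unfold hierarchyDist
    split_ifs
    exacts [le_rfl, (hD_pos _).le]
  refine ⟨fun x _ => if_pos rfl, fun x _ y _ hxy => ?_, fun x _ y _ => ?_,
    fun x _ y _ z _ => ?_⟩
  · rw [hierarchyDist, if_neg hxy]
    exact hD_pos _
  · unfold hierarchyDist
    rw [agreeDepth_comm]
    simp only [eq_comm]
  · rcases eq_or_ne x z with rfl | hxz
    · exact (if_pos rfl).trans_le ((nonneg x y).trans (le_max_left _ _))
    rcases eq_or_ne x y with rfl | hxy
    · exact le_max_right _ _
    rcases eq_or_ne y z with rfl | hyz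
    · exact le_max_left _ _
    simp only [hierarchyDist, if_neg hxz, if_neg hxy, if_neg hyz, ← hD.map_min]
    exact hD min_agreeDepth_le

theorem dist_le_hierarchyDist [PseudoMetricSpace X] (h₀ : ∀ x y : X, dist x y ≤ D 0)
    (hf : ∀ (j : Fin J) (x y : X), f j x = f j y → dist x y ≤ D (j + 1)) (x y : X) :
    dist x y ≤ hierarchyDist f D x y := by
  unfold hierarchyDist
  split_ifs with hxy
  · rw [hxy, dist_self]
  have hle : agreeDepth f x y ≤ J := agreeDepth_le
  have hagree (j : Fin J) (hj : (j : ℕ) < agreeDepth f x y) := eq_of_lt_agreeDepth hj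
  generalize agreeDepth f x y = L at hle hagree
  cases L with
  | zero => exact h₀ x y
  | succ M => exact hf ⟨M, hle⟩ x y (hagree ⟨M, hle⟩ M.lt_succ_self)

theorem hierarchyDist_le_mul_dist [PseudoMetricSpace X] {ε : ℕ → ℝ} {C : ℝ}
    (hD : ∀ j, D j ≤ C * ε j) (hC : 0 ≤ C) (hsep : x ≠ y → ∃ j, f j x ≠ f j y)
    (hpad : ∀ (j : Fin J) (y : X), dist x y ≤ ε j → f j x = f j y) :
    hierarchyDist f D x y ≤ C * dist x y := by
  rcases eq_or_ne x y with rfl | hxy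
  · simp [hierarchyDist]
  obtain ⟨j, hj⟩ := hsep hxy
  have hL := agreeDepth_lt_of_ne hj
  rw [hierarchyDist, if_neg hxy]
  have hε : ε (agreeDepth f x y) < dist x y :=
    lt_of_not_ge fun h => ne_at_agreeDepth hL (hpad _ y h)
  exact (hD _).trans (mul_le_mul_of_nonneg_left hε.le hC)

end Hierarchy

section FirstInOrder

variable {X : Type*} {n : ℕ} {σ : X ≃ Fin n} {W V : Finset X} {hW : W.Nonempty} {y w w' : X}

noncomputable def firstIn (σ : X ≃ Fin n) (W : Finset X) (hW : W.Nonempty) : X :=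
  σ.symm ((W.image σ).min' (hW.image σ))

lemma firstIn_mem : firstIn σ W hW ∈ W := by
  obtain ⟨y, hy, hσy⟩ := mem_image.mp ((W.image σ).min'_mem (hW.image σ))
  rwa [firstIn, ← hσy, Equiv.symm_apply_apply]

lemma firstIn_le (hy : y ∈ W) : σ (firstIn σ W hW) ≤ σ y := by
  rw [firstIn, Equiv.apply_symm_apply]
  exact min'_le _ _ (mem_image_of_mem σ hy)

lemma firstIn_eq (hy : y ∈ W) (hmin : ∀ z ∈ W, σ y ≤ σ z) : firstIn σ W hW = y :=
  σ.injective ((firstIn_le hy).antisymm (hmin _ firstIn_mem))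

lemma swap_apply_mem (hw : w ∈ W) (hw' : w' ∈ W) (hy : y ∈ W) : Equiv.swap w w' y ∈ W := by
  rw [Equiv.swap_apply_def]
  split_ifs <;> assumption

lemma firstIn_swap_trans (hw : w ∈ W) (hw' : w' ∈ W) :
    firstIn ((Equiv.swap w w').trans σ) W hW = Equiv.swap w w' (firstIn σ W hW) :=
  firstIn_eq (swap_apply_mem hw hw' firstIn_mem) fun z hz => by
    simpa using firstIn_le (σ := σ) (hW := hW) (swap_apply_mem hw hw' hz)

variable [Fintype X]

/-- Precomposing with the transposition of `w` and `w'` matches the orders in which `w` comes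
first with those in which `w'` does. -/
lemma card_filter_firstIn_eq (hw : w ∈ W) (hw' : w' ∈ W) :
    #{σ : X ≃ Fin n | firstIn σ W hW = w} = #{σ : X ≃ Fin n | firstIn σ W hW = w'} := by
  refine card_bij' (fun σ _ => (Equiv.swap w w').trans σ) (fun σ _ => (Equiv.swap w w').trans σ)
    ?_ ?_ (fun σ _ => by ext; simp) (fun σ _ => by ext; simp)
  all_goals
    intro σ hσ
    simp only [mem_filter, mem_univ, true_and] at hσ ⊢
    simp [firstIn_swap_trans hw hw', hσ]

theorem card_filter_firstIn_mem_mul_card (hV : V ⊆ W) :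
    #{σ : X ≃ Fin n | firstIn σ W hW ∈ V} * #W = Fintype.card (X ≃ Fin n) * #V := by
  have ⟨w₀, hw₀⟩ := hW
  have fiberwise (U : Finset X) (hU : U ⊆ W) :
      #{σ : X ≃ Fin n | firstIn σ W hW ∈ U} =
        #U * #{σ : X ≃ Fin n | firstIn σ W hW = w₀} := by
    rw [card_eq_sum_card_fiberwise (s := {σ : X ≃ Fin n | firstIn σ W hW ∈ U}) (t := U)
      (fun σ hσ => (mem_filter.mp hσ).2), ← smul_eq_mul, ← sum_const]
    refine sum_congr rfl fun u hu => ?_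
    rw [← card_filter_firstIn_eq (hU hu) hw₀, filter_filter]
    congr 1
    exact filter_congr fun σ _ => ⟨fun h => h.2, fun h => ⟨h ▸ hu, h⟩⟩
  have hall : #{σ : X ≃ Fin n | firstIn σ W hW ∈ W} = Fintype.card (X ≃ Fin n) := by
    rw [filter_true_of_mem fun σ _ => firstIn_mem, card_univ]
  rw [← hall, fiberwise V hV, fiberwise W subset_rfl]
  ring

end FirstInOrder

section FirstInBall

variable {X : Type*} [PseudoMetricSpace X] [Fintype X] {n : ℕ} {σ : X ≃ Fin n} {x y z : X}
  {r r' t : ℝ}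

noncomputable def ballFinset (x : X) (r : ℝ) : Finset X := {y | dist y x ≤ r}

@[simp]
lemma mem_ballFinset : y ∈ ballFinset x r ↔ dist y x ≤ r := by simp [ballFinset]

lemma ballFinset_mono (h : r ≤ r') : ballFinset x r ⊆ ballFinset x r' := fun _ hy =>
  mem_ballFinset.mpr ((mem_ballFinset.mp hy).trans h)

lemma one_le_card_ballFinset (hr : 0 ≤ r) : 1 ≤ #(ballFinset x r) :=
  card_pos.mpr ⟨x, by simpa⟩

/-- Junk value `x` when `r < 0`. -/
noncomputable def firstInBall (σ : X ≃ Fin n) (r : ℝ) (x : X) : X :=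
  if hr : 0 ≤ r then firstIn σ (ballFinset x r) (card_pos.mp (one_le_card_ballFinset hr)) else x

lemma firstInBall_of_nonneg (hr : 0 ≤ r) :
    firstInBall σ r x = firstIn σ (ballFinset x r) (card_pos.mp (one_le_card_ballFinset hr)) :=
  dif_pos hr

lemma dist_firstInBall_le (hr : 0 ≤ r) : dist (firstInBall σ r x) x ≤ r := by
  rw [firstInBall_of_nonneg hr, ← mem_ballFinset]
  exact firstIn_mem

lemma firstInBall_le (hy : dist y x ≤ r) : σ (firstInBall σ r x) ≤ σ y := by
  rw [firstInBall_of_nonneg (dist_nonneg.trans hy)]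
  exact firstIn_le (mem_ballFinset.mpr hy)

lemma firstInBall_eq (hy : dist y x ≤ r) (hmin : ∀ z, dist z x ≤ r → σ y ≤ σ z) :
    firstInBall σ r x = y := by
  rw [firstInBall_of_nonneg (dist_nonneg.trans hy)]
  exact firstIn_eq (mem_ballFinset.mpr hy) fun z hz => hmin z (mem_ballFinset.mp hz)

/-- The ball of radius `r` around `z` contains that point and lies inside the ball of radius
`r + t` around `x`. -/
lemma firstInBall_eq_firstInBall_of_dist_le (hx : dist (firstInBall σ (r + t) x) x ≤ r - t)
    (hz : dist z x ≤ t) :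
    firstInBall σ r z = firstInBall σ (r + t) x := by
  refine firstInBall_eq ?_ fun w hw => firstInBall_le ?_
  · linarith [dist_triangle (firstInBall σ (r + t) x) x z, dist_comm x z]
  · linarith [dist_triangle w z x]

theorem card_filter_dist_firstInBall_le_mul_card (hr : 0 ≤ r) (hrr' : r ≤ r') :
    #{σ : X ≃ Fin n | dist (firstInBall σ r' x) x ≤ r} * #(ballFinset x r') =
      Fintype.card (X ≃ Fin n) * #(ballFinset x r) := by
  rw [← card_filter_firstIn_mem_mul_card (ballFinset_mono hrr')
    (hW := card_pos.mp (one_le_card_ballFinset (hr.trans hrr')))]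
  congr 2
  ext σ
  simp [firstInBall_of_nonneg (hr.trans hrr')]

end FirstInBall

section RealInequalities

lemma prod_range_div_add_two_mul {b : ℕ → ℝ} (hb : ∀ i, b i ≠ 0) (N : ℕ) :
    (∏ a ∈ range N, b a / b (a + 2)) * (b N * b (N + 1)) = b 0 * b 1 := by
  induction N with
  | zero => simp
  | succ N ih =>
    rw [prod_range_succ, ← ih]
    field_simp [hb]

/-- AM–GM applied to the ratios, whose product telescopes. -/
lemma mul_rpow_le_sum_range_div_add_two {b : ℕ → ℝ} (hb : ∀ i, 0 < b i) (hmono : Monotone b)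
    {N : ℕ} (hN : 0 < N) :
    N * (b 0 / b (N + 1)) ^ (2 / N : ℝ) ≤ ∑ a ∈ range N, b a / b (a + 2) := by
  have hN' : (0 : ℝ) < N := Nat.cast_pos.mpr hN
  have hq : ∀ a ∈ range N, 0 ≤ b a / b (a + 2) := fun a _ => (div_pos (hb _) (hb _)).le
  have amgm : (∏ a ∈ range N, b a / b (a + 2)) ^ (N : ℝ)⁻¹ ≤
      (∑ a ∈ range N, b a / b (a + 2)) / N := by
    simpa using Real.geom_mean_le_arith_mean (range N) (fun _ => 1) _ (fun _ _ => zero_le_one)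
      (by simpa using hN) hq
  have hsq : (b 0 / b (N + 1)) ^ 2 ≤ ∏ a ∈ range N, b a / b (a + 2) := by
    rw [eq_div_of_mul_eq (mul_pos (hb N) (hb (N + 1))).ne'
      (prod_range_div_add_two_mul (fun i => (hb i).ne') N), div_pow,
      div_le_div_iff₀ (pow_pos (hb _) 2) (mul_pos (hb N) (hb (N + 1)))]
    have := hb 0; have := hb 1; have := hb N; have := hb (N + 1)
    calc b 0 ^ 2 * (b N * b (N + 1)) = b 0 * b 0 * (b N * b (N + 1)) := by ring
      _ ≤ b 0 * b 1 * (b (N + 1) * b (N + 1)) := by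
        gcongr
        exacts [hmono (Nat.zero_le 1), hmono (Nat.le_succ N)]
      _ = b 0 * b 1 * b (N + 1) ^ 2 := by ring
  calc (N : ℝ) * (b 0 / b (N + 1)) ^ (2 / N : ℝ)
      = N * ((b 0 / b (N + 1)) ^ 2) ^ (N : ℝ)⁻¹ := by
        rw [← Real.rpow_natCast, ← Real.rpow_mul (div_pos (hb 0) (hb _)).le]
        norm_num [div_eq_mul_inv]
    _ ≤ N * (∏ a ∈ range N, b a / b (a + 2)) ^ (N : ℝ)⁻¹ := by gcongr
    _ ≤ ∑ a ∈ range N, b a / b (a + 2) := by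
        rwa [le_div_iff₀ hN', mul_comm] at amgm

lemma div_le_prod_range_succ_div {A B : ℕ → ℝ} (hA : ∀ j, 0 < A j) (hB : ∀ j, 0 < B j)
    (hBA : ∀ j, B (j + 1) ≤ A j) (J : ℕ) :
    A J / B 0 ≤ ∏ j ∈ range (J + 1), A j / B j := by
  induction J with
  | zero => simp
  | succ J ih =>
    rw [prod_range_succ]
    calc A (J + 1) / B 0 = A (J + 1) / B (J + 1) * (B (J + 1) / B 0) := by
          field_simp [(hB (J + 1)).ne']
      _ ≤ A (J + 1) / B (J + 1) * (A J / B 0) := by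
          have := hA (J + 1); have := hB (J + 1); have := hB 0
          gcongr
          exact hBA J
      _ ≤ _ := by
          rw [mul_comm]
          have := hA (J + 1); have := hB (J + 1)
          gcongr

end RealInequalities

section Scale

abbrev LevelSample (X : Type*) (n N : ℕ) : Type _ := (X ≃ Fin n) × Fin N

variable {X : Type*} [PseudoMetricSpace X] [Fintype X] {n N : ℕ} {s : ℝ}
  {ω : LevelSample X n N} {x y : X}

/-- One level of the random partition with step `s`: the sample `ω = (σ, a)` labels `x` by the
`σ`-first point within `(N + a + 1) s` of `x`. -/
noncomputable def label (s : ℝ) (ω : LevelSample X n N) (x : X) : X :=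
  firstInBall ω.1 ((N + (ω.2 : ℕ) + 1 : ℝ) * s) x

def IsPadded (s : ℝ) (ω : LevelSample X n N) (x : X) : Prop :=
  dist (firstInBall ω.1 ((N + (ω.2 : ℕ) + 2 : ℝ) * s) x) x ≤ (N + (ω.2 : ℕ) : ℝ) * s

lemma label_eq_of_isPadded (hx : IsPadded s ω x) (hy : dist y x ≤ s) :
    label s ω y = label s ω x := by
  have hx' : dist (firstInBall ω.1 ((N + (ω.2 : ℕ) + 1 : ℝ) * s + s) x) x ≤
      (N + (ω.2 : ℕ) + 1 : ℝ) * s - s := by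
    rw [IsPadded] at hx
    convert hx using 3 <;> ring
  rw [label, label, firstInBall_eq_firstInBall_of_dist_le hx' hy,
    firstInBall_eq_firstInBall_of_dist_le hx' ((dist_self x).trans_le (dist_nonneg.trans hy))]

lemma dist_le_of_label_eq (hs : 0 ≤ s) (h : label s ω x = label s ω y) :
    dist x y ≤ 4 * N * s := by
  have hr : 0 ≤ (N + (ω.2 : ℕ) + 1 : ℝ) * s := by positivity
  have ha : ((ω.2 : ℕ) + 1 : ℝ) ≤ N := by exact_mod_cast ω.2.isLt
  have hx := dist_firstInBall_le (σ := ω.1) (x := x) hr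
  have hy := dist_firstInBall_le (σ := ω.1) (x := y) hr
  rw [← label, h] at hx
  rw [← label] at hy
  calc dist x y ≤ dist (label s ω y) x + dist (label s ω y) y := dist_triangle_left _ _ _
    _ ≤ 2 * ((N + (ω.2 : ℕ) + 1 : ℝ) * s) := by linarith
    _ ≤ 4 * N * s := by nlinarith

theorem card_isPadded_ge (hs : 0 ≤ s) (hN : 0 < N) (x : X) :
    Fintype.card (LevelSample X n N) *
        ((#(ballFinset x (N * s)) : ℝ) / #(ballFinset x ((2 * N + 1) * s))) ^ (2 / N : ℝ) ≤
      #{ω : LevelSample X n N | IsPadded s ω x} := by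
  set K : ℝ := (Fintype.card (X ≃ Fin n) : ℝ)
  set b : ℕ → ℝ := fun i => #(ballFinset x ((N + i : ℝ) * s))
  have hb : ∀ i, 0 < b i := fun i => by
    simpa [b] using one_le_card_ballFinset (x := x) (r := (N + i : ℝ) * s) (by positivity)
  have hmono : Monotone b := fun i j hij => by
    simp only [b]
    gcongr
    exact ballFinset_mono (by gcongr)
  have hlevel (a : Fin N) : (#{σ : X ≃ Fin n | IsPadded s (σ, a) x} : ℝ) =
      K * (b a / b (a + 2)) := by
    have key := card_filter_dist_firstInBall_le_mul_card (n := n) (x := x)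
      (r := (N + (a : ℕ) : ℝ) * s) (r' := (N + (a : ℕ) + 2 : ℝ) * s) (by positivity)
      (mul_le_mul_of_nonneg_right (by linarith) hs)
    rw [mul_div_assoc', eq_div_iff (hb _).ne']
    simp only [b, K, IsPadded, Nat.cast_add, Nat.cast_ofNat, ← add_assoc]
    exact_mod_cast key
  calc (Fintype.card (LevelSample X n N) : ℝ) *
        ((#(ballFinset x (N * s)) : ℝ) / #(ballFinset x ((2 * N + 1) * s))) ^ (2 / N : ℝ)
      = K * (N * (b 0 / b (N + 1)) ^ (2 / N : ℝ)) := by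
        simp only [b, K, Fintype.card_prod, Fintype.card_fin]
        push_cast
        ring_nf
    _ ≤ K * ∑ a ∈ range N, b a / b (a + 2) := by
        gcongr
        exact mul_rpow_le_sum_range_div_add_two hb hmono hN
    _ = #{ω : LevelSample X n N | IsPadded s ω x} := by
        rw [mul_sum, ← Fin.sum_univ_eq_sum_range (fun a => K * (b a / b (a + 2))),
          natCast_card_filter, Fintype.sum_prod_type_right]
        refine sum_congr rfl fun a _ => ?_
        rw [← hlevel, natCast_card_filter]

end Scale

section FirstMoment

variable {S Z : Type*} [Fintype S] [Fintype Z]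

theorem exists_mul_le_card_filter [Nonempty S] (P : S → Z → Prop) [∀ ω z, Decidable (P ω z)]
    {c : ℝ} (h : ∀ z, Fintype.card S * c ≤ #{ω | P ω z}) :
    ∃ ω, Fintype.card Z * c ≤ #{z | P ω z} := by
  have hsum : ∑ ω : S, (#{z | P ω z} : ℝ) = ∑ z : Z, (#{ω | P ω z} : ℝ) := by
    exact_mod_cast sum_card_bipartiteAbove_eq_sum_card_bipartiteBelow (s := univ) (t := univ) P
  refine (exists_le_of_sum_le univ_nonempty ?_).imp fun ω hω => hω.2
  calc ∑ _ω : S, (Fintype.card Z * c : ℝ) = ∑ _z : Z, (Fintype.card S * c : ℝ) := by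
        simp only [sum_const, card_univ, nsmul_eq_mul]
        ring
    _ ≤ _ := sum_le_sum fun z _ => h z
    _ = _ := hsum.symm

lemma card_filter_forall_apply {ι : Type*} [Fintype ι] [DecidableEq ι] (P : ι → S → Prop)
    [∀ i, DecidablePred (P i)] [DecidablePred fun ω : ι → S => ∀ i, P i (ω i)] :
    #{ω : ι → S | ∀ i, P i (ω i)} = ∏ i, #{w | P i w} := by
  rw [← Fintype.card_piFinset]
  congr 1
  ext ω
  simp [Fintype.mem_piFinset]

end FirstMoment

section MultiScale

variable {X : Type*} [PseudoMetricSpace X] [Fintype X] {n N : ℕ} {s : ℝ}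

/-- Along the scales `s / 8 ^ j` the ball of radius `(2N + 1)` steps at scale `j + 1` lies inside
the ball of radius `N` steps at scale `j`, so the per-scale ratios telescope to at least `1 / n`. -/
lemma card_pow_mul_le_prod_card_isPadded (hs : 0 ≤ s) (hN : 0 < N) (J : ℕ) (x : X) :
    (Fintype.card (LevelSample X n N) : ℝ) ^ (J + 1) *
        ((Fintype.card X : ℝ) ^ (2 / N : ℝ))⁻¹ ≤
      ∏ j : Fin (J + 1),
        (#{ω : LevelSample X n N | IsPadded (s / 8 ^ (j : ℕ)) ω x} : ℝ) := by
  set A : ℕ → ℝ := fun j => #(ballFinset x (N * (s / 8 ^ j)))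
  set B : ℕ → ℝ := fun j => #(ballFinset x ((2 * N + 1) * (s / 8 ^ j)))
  have hA : ∀ j, 1 ≤ A j := fun j => by
    simpa [A] using one_le_card_ballFinset (x := x) (r := N * (s / 8 ^ j)) (by positivity)
  have hB : ∀ j, 0 < B j := fun j => by
    simpa [B] using one_le_card_ballFinset (x := x) (r := (2 * N + 1) * (s / 8 ^ j))
      (by positivity)
  have hBA : ∀ j, B (j + 1) ≤ A j := fun j => by
    have hN1 : (1 : ℝ) ≤ N := by exact_mod_cast hN
    simp only [A, B]
    gcongr
    refine ballFinset_mono ?_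
    rw [pow_succ, ← div_div]
    have : 0 ≤ s / 8 ^ j := by positivity
    nlinarith
  have hB0 : B 0 ≤ Fintype.card X := by
    simp only [B]
    exact_mod_cast card_le_univ _
  have hratio : (Fintype.card X : ℝ)⁻¹ ≤ ∏ j ∈ range (J + 1), A j / B j :=
    calc (Fintype.card X : ℝ)⁻¹ ≤ A J / B 0 := by
          rw [inv_eq_one_div]
          exact div_le_div₀ (zero_le_one.trans (hA J)) (hA J) (hB 0) hB0
      _ ≤ _ := div_le_prod_range_succ_div (fun j => one_pos.trans_le (hA j)) hB hBA J
  set K : ℝ := (Fintype.card (LevelSample X n N) : ℝ)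
  calc K ^ (J + 1) * ((Fintype.card X : ℝ) ^ (2 / N : ℝ))⁻¹
      ≤ K ^ (J + 1) * (∏ j ∈ range (J + 1), A j / B j) ^ (2 / N : ℝ) := by
        rw [← Real.inv_rpow (by positivity)]
        gcongr
    _ = ∏ j : Fin (J + 1), K * (A j / B j) ^ (2 / N : ℝ) := by
        rw [Fin.prod_univ_eq_prod_range (fun j => K * (A j / B j) ^ (2 / N : ℝ)),
          prod_mul_distrib, prod_const, card_range,
          Real.finsetProd_rpow _ _ fun j _ => (div_pos (one_pos.trans_le (hA j)) (hB j)).le]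
    _ ≤ _ := prod_le_prod (fun j _ => by positivity) fun j _ =>
        card_isPadded_ge (by positivity) hN x

theorem exists_sample_card_isPadded_ge [Nonempty X] (hs : 0 ≤ s) (hN : 0 < N) (J : ℕ) :
    ∃ ω : Fin (J + 1) → LevelSample X (Fintype.card X) N,
      (Fintype.card X : ℝ) ^ (1 - 2 / N : ℝ) ≤
        #{x | ∀ j : Fin (J + 1), IsPadded (s / 8 ^ (j : ℕ)) (ω j) x} := by
  have : Nonempty (X ≃ Fin (Fintype.card X)) := ⟨Fintype.equivFin X⟩
  have : Nonempty (Fin N) := ⟨⟨0, hN⟩⟩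
  have hn : (0 : ℝ) < Fintype.card X := by exact_mod_cast Fintype.card_pos
  obtain ⟨ω, hω⟩ := exists_mul_le_card_filter
    (fun (ω : Fin (J + 1) → LevelSample X (Fintype.card X) N) x =>
      ∀ j : Fin (J + 1), IsPadded (s / 8 ^ (j : ℕ)) (ω j) x)
    (c := ((Fintype.card X : ℝ) ^ (2 / N : ℝ))⁻¹) fun x => by
      rw [card_filter_forall_apply fun (j : Fin (J + 1)) w => IsPadded (s / 8 ^ (j : ℕ)) w x,
        Fintype.card_fun, Fintype.card_fin, Nat.cast_prod, Nat.cast_pow]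
      exact card_pow_mul_le_prod_card_isPadded hs hN J x
  refine ⟨ω, le_of_eq_of_le ?_ hω⟩
  rw [Real.rpow_sub hn, Real.rpow_one, div_eq_mul_inv]

end MultiScale

lemma exists_pos_dist_le (X : Type*) [PseudoMetricSpace X] [Finite X] :
    ∃ C > 0, ∀ x y : X, dist x y ≤ C := by
  obtain ⟨C, hC⟩ := Metric.isBounded_iff.mp (Set.finite_univ (α := X)).isBounded
  exact ⟨max C 1, by positivity, fun x y => (hC trivial trivial).trans (le_max_left _ _)⟩

lemma exists_pos_le_dist (X : Type*) [MetricSpace X] [Finite X] :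
    ∃ ε > 0, ∀ x y : X, x ≠ y → ε ≤ dist x y := by
  by_cases h : (Set.univ : Set X).Nontrivial
  · exact ⟨_, Set.infsep_pos_iff_nontrivial_of_finite.mpr h,
      fun x y hxy => Set.infsep_le_dist_of_mem trivial trivial hxy⟩
  · exact ⟨1, one_pos, fun x y hxy => absurd ⟨x, trivial, y, trivial, hxy⟩ h⟩

theorem exists_ultrametric_subset_nat (X : Type) [MetricSpace X] [Fintype X] [Nonempty X]
    {N : ℕ} (hN : 0 < N) :
    ∃ (Y : Finset X) (ρ : X → X → ℝ),
      (Fintype.card X : ℝ) ^ (1 - 2 / N : ℝ) ≤ #Y ∧ IsUltrametricOn (↑Y) ρ ∧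
        ∀ x ∈ Y, ∀ y ∈ Y, dist x y ≤ ρ x y ∧ ρ x y ≤ 32 * N * dist x y := by
  obtain ⟨C, hC, hdiam⟩ := exists_pos_dist_le X
  obtain ⟨ε, hε, hsep⟩ := exists_pos_le_dist X
  set s := C / (32 * N)
  have hs : 0 < s := by positivity
  obtain ⟨J, hJ⟩ : ∃ J : ℕ, 4 * N * s / ε < 8 ^ J :=
    pow_unbounded_of_one_lt _ (by norm_num)
  obtain ⟨ω, hω⟩ := exists_sample_card_isPadded_ge (X := X) hs.le hN J
  set f : Fin (J + 1) → X → X := fun j => label (s / 8 ^ (j : ℕ)) (ω j)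
  set D : ℕ → ℝ := fun j => 32 * N * (s / 8 ^ j)
  have hD : Antitone D := fun i j hij => by
    simp only [D]
    gcongr
    norm_num
  refine ⟨_, hierarchyDist f D, hω, isUltrametricOn_hierarchyDist hD (fun j => by positivity) _,
    fun x hx y _ => ⟨dist_le_hierarchyDist (fun x y => ?_) (fun j x y hxy => ?_) x y,
      hierarchyDist_le_mul_dist (fun j => le_rfl) (by positivity) (fun hxy => ?_)
        fun j y hy => ?_⟩⟩
  · simpa [D, s, field] using hdiam x y
  · calc dist x y ≤ 4 * N * (s / 8 ^ (j : ℕ)) := dist_le_of_label_eq (by positivity) hxy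
      _ = D (j + 1) := by simp only [D]; ring
  · refine ⟨Fin.last J, fun hlast => (hsep x y hxy).not_gt ?_⟩
    calc dist x y ≤ 4 * N * (s / 8 ^ J) := dist_le_of_label_eq (by positivity) hlast
      _ < ε := by
        rw [mul_div_assoc', div_lt_iff₀ (by positivity)]
        linarith [(div_lt_iff₀ hε).mp hJ]
  · exact (label_eq_of_isPadded ((mem_filter.mp hx).2 j) (dist_comm x y ▸ hy)).symm

theorem exists_ultrametric_subset (X : Type) [MetricSpace X] [Fintype X] [Nonempty X] {α : ℝ}
    (hα : 128 ≤ α) :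
    ∃ (Y : Finset X) (ρ : X → X → ℝ),
      (Fintype.card X : ℝ) ^ (1 - 128 / α) ≤ #Y ∧ IsUltrametricOn (↑Y) ρ ∧
        ∀ x ∈ Y, ∀ y ∈ Y, dist x y ≤ ρ x y ∧ ρ x y ≤ α * dist x y := by
  set N := ⌊α / 32⌋₊
  have hN : 0 < N := Nat.floor_pos.mpr (by linarith)
  have hN32 : 32 * N ≤ α := by linarith [Nat.floor_le (a := α / 32) (by positivity)]
  have hN64 : α ≤ 64 * N := by
    have : (1 : ℝ) ≤ N := by exact_mod_cast hN
    linarith [Nat.lt_floor_add_one (α / 32)]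
  obtain ⟨Y, ρ, hY, hρ, hbounds⟩ := exists_ultrametric_subset_nat X hN
  have hexp : 1 - 128 / α ≤ 1 - 2 / N := by
    rw [sub_le_sub_iff_left, div_le_div_iff₀ (by positivity) (by positivity)]
    linarith
  refine ⟨Y, ρ, (Real.rpow_le_rpow_of_exponent_le ?_ hexp).trans hY, hρ, fun x hx y hy => ?_⟩
  · exact_mod_cast Fintype.card_pos
  obtain ⟨hlow, hup⟩ := hbounds x hx y hy
  exact ⟨hlow, hup.trans (by gcongr)⟩

end MetricRamsey

open MetricRamsey in
/-- Metric Ramsey-type theorem: every `n`-point metric space contains a subset of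
size at least `n^(1 - C·log(2α)/α)` which is `α`-equivalent to an ultrametric. -/
theorem metric_ramsey_ultrametric :
    ∃ C : ℝ, 0 < C ∧
      ∀ (α : ℝ), 1 < α →
        ∀ (X : Type) [MetricSpace X] [Fintype X], 1 ≤ Fintype.card X →
          ∃ (Y : Finset X) (ρ : X → X → ℝ),
            (Fintype.card X : ℝ) ^ (1 - C * Real.log (2 * α) / α) ≤ (Y.card : ℝ) ∧
            IsUltrametricOn (↑Y) ρ ∧
            ∀ x ∈ Y, ∀ y ∈ Y,
              dist x y ≤ ρ x y ∧ ρ x y ≤ α * dist x y := by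
  refine ⟨200, by norm_num, fun α hα X _ _ hn => ?_⟩
  have hX : Nonempty X := Fintype.card_pos_iff.mp hn
  have hn' : (1 : ℝ) ≤ Fintype.card X := by exact_mod_cast hn
  by_cases hsmall : 1 - 200 * Real.log (2 * α) / α ≤ 0
  · obtain ⟨x₀⟩ := hX
    refine ⟨{x₀}, fun _ _ => 0, ?_, isUltrametricOn_zero_of_subsingleton (by simp), ?_⟩
    · simpa using Real.rpow_le_one_of_one_le_of_nonpos hn' hsmall
    · simp
  have hlog : 128 ≤ 200 * Real.log (2 * α) := by
    have := Real.log_le_log two_pos (by linarith : (2 : ℝ) ≤ 2 * α)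
    linarith [Real.log_two_gt_d9]
  have hα' : 200 * Real.log (2 * α) < α := (div_lt_one (by linarith)).mp (by linarith)
  obtain ⟨Y, ρ, hY, hρ⟩ := exists_ultrametric_subset X (hlog.trans hα'.le)
  refine ⟨Y, ρ, (Real.rpow_le_rpow_of_exponent_le hn' ?_).trans hY, hρ⟩
  gcongr
end

section
/- There exists a universal constant C > 0 with the following property. Let G = (V,E) be a finite connected d-regular simple graph on n vertices with d ≥ 3, and suppose G has absolute multiplicative spectral gap γ for some 0 < γ < 1. Then for every real α > 1 there exists a subset B ⊆ V with |B| ≥ n^(1 − C·log d/(α·log(1/γ))) and a real r > 0 such that r ≤ d_G(u,v) ≤ α·r for all distinct u,v ∈ B. -/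
/-- A `d`-regular graph `G` has absolute multiplicative spectral gap `γ`:
`‖Av‖₂ ≤ γ·d·‖v‖₂` for every vector `v` orthogonal to the all-ones vector. -/
def HasAbsSpectralGap {V : Type} [Fintype V] [DecidableEq V]
    (G : SimpleGraph V) [DecidableRel G.Adj] (d : ℕ) (γ : ℝ) : Prop :=
  ∀ v : V → ℝ, (∑ u, v u) = 0 →
    ∑ u, ((G.adjMatrix ℝ).mulVec v u) ^ 2 ≤ (γ * d) ^ 2 * ∑ u, (v u) ^ 2

/-!
A spectral gap `γ` forces small diameter: the number of walks of length `k` from `u`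
to `v` differs from `d ^ k / n` by at most `(γ d) ^ k`, so the diameter is at most
`k = ⌊log n / log (1 / γ)⌋ + 1`. With `t = ⌊k / α⌋`, a maximal `(t + 1)`-separated set `B` has
all distances in `[t + 1, α (t + 1)]`, and the balls of radius `t` around it cover `V`; as each
has at most `(d + 1) ^ t ≤ n ^ (4 log d / (α log (1 / γ)))` points, `B` is large.
-/

open Finset Matrix

namespace SimpleGraph

variable {V : Type*} [Fintype V] {G : SimpleGraph V} [DecidableRel G.Adj] {d : ℕ}

lemma sum_adjMatrix_mulVec (hreg : G.IsRegularOfDegree d) (v : V → ℝ) :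
    ∑ u, (G.adjMatrix ℝ *ᵥ v) u = d * ∑ u, v u := by
  have hcol : (1 : V → ℝ) ᵥ* G.adjMatrix ℝ = fun _ ↦ (d : ℝ) := by
    ext x
    simp [hreg x]
  calc ∑ u, (G.adjMatrix ℝ *ᵥ v) u = 1 ⬝ᵥ (G.adjMatrix ℝ *ᵥ v) := (one_dotProduct _).symm
    _ = d * ∑ u, v u := by rw [dotProduct_mulVec, hcol]; simp [dotProduct, mul_sum]

variable [DecidableEq V]

lemma sum_adjMatrix_pow_mulVec (hreg : G.IsRegularOfDegree d) (k : ℕ) (v : V → ℝ) :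
    ∑ u, (G.adjMatrix ℝ ^ k *ᵥ v) u = d ^ k * ∑ u, v u := by
  induction k with
  | zero => simp
  | succ k ih => rw [pow_succ', ← mulVec_mulVec, sum_adjMatrix_mulVec hreg, ih, pow_succ', mul_assoc]

lemma adjMatrix_pow_mulVec_const (hreg : G.IsRegularOfDegree d) (k : ℕ) (c : ℝ) :
    G.adjMatrix ℝ ^ k *ᵥ Function.const V c = Function.const V ((d : ℝ) ^ k * c) := by
  induction k with
  | zero => simp
  | succ k ih =>
    ext x
    rw [pow_succ', ← mulVec_mulVec, ih, adjMatrix_mulVec_const_apply_of_regular hreg,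
      Function.const_apply, pow_succ', mul_assoc]

end SimpleGraph

namespace HasAbsSpectralGap

open SimpleGraph

variable {V : Type} [Fintype V] [DecidableEq V] {G : SimpleGraph V} [DecidableRel G.Adj]
  {d : ℕ} {γ : ℝ}

lemma sum_sq_pow_mulVec_le (hreg : G.IsRegularOfDegree d)
    (hgap : HasAbsSpectralGap G d γ) (k : ℕ) {v : V → ℝ} (hv : ∑ u, v u = 0) :
    ∑ u, (G.adjMatrix ℝ ^ k *ᵥ v) u ^ 2 ≤ (γ * d) ^ (2 * k) * ∑ u, v u ^ 2 := by
  induction k with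
  | zero => simp
  | succ k ih =>
    have hsum : ∑ u, (G.adjMatrix ℝ ^ k *ᵥ v) u = 0 := by
      rw [sum_adjMatrix_pow_mulVec hreg, hv, mul_zero]
    rw [pow_succ', ← mulVec_mulVec]
    calc _ ≤ (γ * d) ^ 2 * ∑ u, (G.adjMatrix ℝ ^ k *ᵥ v) u ^ 2 := hgap _ hsum
      _ ≤ (γ * d) ^ 2 * ((γ * d) ^ (2 * k) * ∑ u, v u ^ 2) := by gcongr
      _ = _ := by ring

lemma dist_le (hreg : G.IsRegularOfDegree d) (hgap : HasAbsSpectralGap G d γ)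
    (hd : 0 < d) (hγ : 0 ≤ γ) {k : ℕ} (hk : γ ^ k * Fintype.card V < 1) (u v : V) :
    G.dist u v ≤ k := by
  set n : ℝ := (Fintype.card V : ℝ)
  have hn : 0 < n := by have : Nonempty V := ⟨u⟩; positivity
  set w : V → ℝ := Pi.single u 1 - Function.const V n⁻¹ with hw
  have hw_sum : ∑ x, w x = 0 := by simp [w, sum_sub_distrib, n, hn.ne']
  have hw_sq : ∑ x, w x ^ 2 ≤ 1 := by
    calc ∑ x, w x ^ 2 = w ⬝ᵥ w := by simp [dotProduct, sq]
      _ = w u - (∑ x, w x) * n⁻¹ := by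
        nth_rw 2 [hw]
        rw [dotProduct_sub, dotProduct_single, mul_one]
        simp [dotProduct, sum_mul]
      _ ≤ 1 := by
        rw [hw_sum, zero_mul, sub_zero, hw, Pi.sub_apply, Pi.single_eq_same, Function.const_apply]
        linarith [inv_pos.2 hn]
  have hAw : (G.adjMatrix ℝ ^ k *ᵥ w) v = (G.adjMatrix ℝ ^ k) v u - d ^ k * n⁻¹ := by
    simp [w, mulVec_sub, adjMatrix_pow_mulVec_const hreg]
  have hAw_sq : (G.adjMatrix ℝ ^ k *ᵥ w) v ^ 2 ≤ ((γ * d) ^ k) ^ 2 :=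
    calc _ ≤ ∑ x, (G.adjMatrix ℝ ^ k *ᵥ w) x ^ 2 :=
          single_le_sum (fun x _ ↦ sq_nonneg _) (mem_univ v)
      _ ≤ (γ * d) ^ (2 * k) * ∑ x, w x ^ 2 := hgap.sum_sq_pow_mulVec_le hreg k hw_sum
      _ ≤ (γ * d) ^ (2 * k) * 1 := by gcongr
      _ = _ := by ring
  have hwalks : 0 < (G.adjMatrix ℝ ^ k) v u := by
    have hlow := (abs_le_of_sq_le_sq' hAw_sq (by positivity)).1
    have hγk : γ ^ k < n⁻¹ := by rw [← one_div, lt_div_iff₀ hn]; exact hk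
    have : 0 < (d : ℝ) ^ k := by positivity
    rw [hAw, mul_pow] at hlow
    nlinarith
  rw [adjMatrix_pow_apply_eq_card_walk, Nat.cast_pos, Fintype.card_pos_iff] at hwalks
  obtain ⟨p, hp⟩ := hwalks.some
  rw [dist_comm, ← hp]
  exact SimpleGraph.dist_le p

end HasAbsSpectralGap

namespace SimpleGraph

variable {V : Type*} {G : SimpleGraph V}

lemma Connected.exists_dist_le_and_eq_or_adj (hconn : G.Connected) {b w : V} {t : ℕ}
    (h : G.dist b w ≤ t + 1) : ∃ v, G.dist b v ≤ t ∧ (v = w ∨ G.Adj v w) := by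
  rcases h.lt_or_eq with h | h
  · exact ⟨w, Nat.lt_succ_iff.1 h, Or.inl rfl⟩
  obtain ⟨p, hp⟩ := hconn.exists_walk_length_eq_dist w b
  rw [dist_comm, h] at hp
  cases p with
  | nil => simp at hp
  | cons hadj q =>
    refine ⟨_, ?_, Or.inr hadj.symm⟩
    rw [dist_comm]
    exact (dist_le q).trans (by simp at hp; omega)

variable [Fintype V]

lemma exists_dist_separated_covering (t : ℕ) :
    ∃ B : Finset V, (∀ u ∈ B, ∀ v ∈ B, u ≠ v → t < G.dist u v) ∧
      ∀ v, ∃ b ∈ B, G.dist b v ≤ t := by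
  classical
  set S : Finset (Finset V) := {B | ∀ u ∈ B, ∀ v ∈ B, u ≠ v → t < G.dist u v} with hS
  obtain ⟨B, hB, hmax⟩ := exists_max_image S card ⟨∅, by simp [S]⟩
  rw [hS, mem_filter] at hB
  refine ⟨B, hB.2, fun v ↦ ?_⟩
  by_contra! hfar
  have hvB : v ∉ B := fun hv ↦ by simpa using hfar v hv
  have hins : insert v B ∈ S := by
    simp only [hS, mem_filter, mem_univ, true_and, mem_insert]
    rintro a (rfl | ha) b (rfl | hb) hab
    · exact absurd rfl hab
    · rw [dist_comm]; exact hfar b hb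
    · exact hfar a ha
    · exact hB.2 a ha b hb hab
  have := hmax _ hins
  rw [card_insert_of_notMem hvB] at this
  omega

variable [DecidableEq V] [DecidableRel G.Adj]

lemma card_filter_dist_le (hconn : G.Connected) (b : V) (t : ℕ) :
    #{v | G.dist b v ≤ t} ≤ (G.maxDegree + 1) ^ t := by
  induction t with
  | zero =>
    refine card_le_one.2 fun x hx y hy ↦ ?_
    simp only [mem_filter, mem_univ, true_and, nonpos_iff_eq_zero, hconn.dist_eq_zero_iff] at hx hy
    exact hx ▸ hy
  | succ t ih =>
    calc #{v | G.dist b v ≤ t + 1}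
        ≤ #(({v | G.dist b v ≤ t} : Finset V).biUnion fun v ↦ insert v (G.neighborFinset v)) := by
          refine card_le_card fun w hw ↦ ?_
          obtain ⟨v, hv, hvw⟩ := hconn.exists_dist_le_and_eq_or_adj (mem_filter.1 hw).2
          exact mem_biUnion.2 ⟨v, by simpa using hv, by simpa [eq_comm] using hvw⟩
      _ ≤ #{v | G.dist b v ≤ t} * (G.maxDegree + 1) :=
          card_biUnion_le_card_mul _ _ _ fun v _ ↦
            (card_insert_le _ _).trans (by simpa using G.degree_le_maxDegree v)
      _ ≤ (G.maxDegree + 1) ^ (t + 1) := by rw [pow_succ]; gcongr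

lemma exists_dist_separated_card_le_mul_pow (hconn : G.Connected) (t : ℕ) :
    ∃ B : Finset V, (∀ u ∈ B, ∀ v ∈ B, u ≠ v → t < G.dist u v) ∧
      Fintype.card V ≤ #B * (G.maxDegree + 1) ^ t := by
  obtain ⟨B, hsep, hcov⟩ := exists_dist_separated_covering (G := G) t
  refine ⟨B, hsep, ?_⟩
  calc Fintype.card V ≤ #(B.biUnion fun b ↦ ({v | G.dist b v ≤ t} : Finset V)) := by
        rw [← card_univ]
        refine card_le_card fun v _ ↦ ?_
        obtain ⟨b, hb, hbv⟩ := hcov v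
        exact mem_biUnion.2 ⟨b, hb, by simpa using hbv⟩
    _ ≤ #B * (G.maxDegree + 1) ^ t :=
        card_biUnion_le_card_mul _ _ _ fun b _ ↦ card_filter_dist_le hconn b t

end SimpleGraph

open Real

lemma pow_floor_log_div_log_inv_add_one_mul_lt_one {γ x : ℝ} (hγ0 : 0 < γ) (hγ1 : γ < 1)
    (hx : 0 < x) : γ ^ (⌊log x / log (1 / γ)⌋₊ + 1) * x < 1 := by
  have hL : 0 < log (1 / γ) := log_pos ((one_lt_div hγ0).2 hγ1)
  have hk := Nat.lt_floor_add_one (log x / log (1 / γ))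
  rw [div_lt_iff₀ hL] at hk
  rw [← log_neg_iff (by positivity), log_mul (by positivity) hx.ne', log_pow,
    one_div, log_inv] at *
  push_cast at hk ⊢
  linarith

lemma floor_div_mul_le_two_mul {T α : ℝ} (hT : 0 ≤ T) (hα : 1 < α) :
    (⌊((⌊T⌋₊ + 1 : ℕ) : ℝ) / α⌋₊ : ℝ) * α ≤ 2 * T := by
  set k := ⌊T⌋₊ + 1
  set t := ⌊(k : ℝ) / α⌋₊
  have htk : (t : ℝ) * α ≤ k := (le_div_iff₀ (by linarith)).1 (Nat.floor_le (by positivity))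
  rcases Nat.eq_zero_or_pos t with ht | ht
  · simp [ht, hT]
  have hk : 2 ≤ k := by
    have : (1 : ℝ) < k := by nlinarith [(Nat.one_le_cast (α := ℝ)).2 ht]
    exact_mod_cast this
  have hT1 : 1 ≤ T := by simpa using Nat.one_le_floor_iff _ |>.1 (by omega : 1 ≤ ⌊T⌋₊)
  have hkT : (k : ℝ) ≤ T + 1 := by push_cast [k]; linarith [Nat.floor_le hT]
  linarith

lemma add_one_pow_le_rpow_of_mul_le {n d t : ℕ} {α L : ℝ} (hd : 2 ≤ d) (hn : 0 < n) (hα : 0 < α)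
    (hL : 0 < L) (ht : t * α * L ≤ 2 * log n) :
    ((d : ℝ) + 1) ^ t ≤ (n : ℝ) ^ (4 * log d / (α * L)) := by
  have hd' : (2 : ℝ) ≤ d := by exact_mod_cast hd
  have hlog : log (d + 1) ≤ 2 * log d := by
    calc log (d + 1) ≤ log ((d : ℝ) ^ 2) := log_le_log (by positivity) (by nlinarith)
      _ = 2 * log d := by rw [log_pow]; norm_num
  have hlogd : 0 ≤ log d := log_nonneg (by linarith)
  rw [← log_le_log_iff (by positivity) (by positivity), log_pow, log_rpow (by positivity)]
  calc t * log (d + 1) ≤ t * (2 * log d) := by gcongr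
    _ = t * α * L * (2 * log d) / (α * L) := by field_simp
    _ ≤ 2 * log n * (2 * log d) / (α * L) := by gcongr
    _ = 4 * log d / (α * L) * log n := by ring

lemma rpow_one_sub_le_of_le_mul {n b x E : ℝ} (hn : 0 < n) (hx : 0 < x) (h : n ≤ b * x)
    (hE : x ≤ n ^ E) : n ^ (1 - E) ≤ b := by
  have hb : 0 ≤ b := (pos_of_mul_pos_left (hn.trans_le h) hx.le).le
  rw [rpow_sub hn, rpow_one, div_le_iff₀ (by positivity)]
  exact h.trans (by gcongr)

/-- Lower bound for the Ramsey problem on expanders: a `d`-regular graph on `n`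
vertices with spectral gap `γ` contains a subset of size at least
`n^(1 - C·log d/(α·log(1/γ)))` which is `α`-equivalent to an equilateral space. -/
theorem expander_ramsey_lower :
    ∃ C : ℝ, 0 < C ∧
      ∀ (V : Type) [Fintype V] [DecidableEq V] (G : SimpleGraph V) [DecidableRel G.Adj]
        (d : ℕ) (γ : ℝ),
        G.Connected → 3 ≤ d → G.IsRegularOfDegree d → 0 < γ → γ < 1 →
        HasAbsSpectralGap G d γ →
        ∀ α : ℝ, 1 < α →
          ∃ (B : Finset V) (r : ℝ), 0 < r ∧
            (Fintype.card V : ℝ) ^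
              (1 - C * Real.log d / (α * Real.log (1 / γ))) ≤ (B.card : ℝ) ∧
            ∀ u ∈ B, ∀ v ∈ B, u ≠ v →
              r ≤ (G.dist u v : ℝ) ∧ (G.dist u v : ℝ) ≤ α * r := by
  refine ⟨4, by norm_num, ?_⟩
  intro V _ _ G _ d γ hconn hd hreg hγ0 hγ1 hgap α hα
  set n := Fintype.card V
  set L := log (1 / γ)
  set k := ⌊log n / L⌋₊ + 1
  set t := ⌊(k : ℝ) / α⌋₊
  have : Nonempty V := hconn.nonempty
  have hL : 0 < L := log_pos ((one_lt_div hγ0).2 hγ1)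
  have hdiam : ∀ u v, G.dist u v ≤ k := hgap.dist_le hreg (by omega) hγ0.le
    (pow_floor_log_div_log_inv_add_one_mul_lt_one hγ0 hγ1 (by positivity))
  have hball : ((d : ℝ) + 1) ^ t ≤ (n : ℝ) ^ (4 * log d / (α * L)) := by
    refine add_one_pow_le_rpow_of_mul_le (by omega) Fintype.card_pos (by linarith) hL ?_
    have := floor_div_mul_le_two_mul (div_nonneg (log_natCast_nonneg n) hL.le) hα
    rwa [← le_div_iff₀ hL, mul_div_assoc]
  obtain ⟨B, hsep, hcard⟩ := G.exists_dist_separated_card_le_mul_pow hconn t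
  have hΔ : G.maxDegree ≤ d := G.maxDegree_le_of_forall_degree_le d fun v ↦ (hreg v).le
  have hcard' : (n : ℝ) ≤ B.card * ((d : ℝ) + 1) ^ t := by
    exact_mod_cast hcard.trans (by gcongr)
  refine ⟨B, t + 1, by positivity, rpow_one_sub_le_of_le_mul (by positivity) (by positivity)
    hcard' hball, fun u hu v hv huv ↦ ⟨by exact_mod_cast hsep u hu v hv huv, ?_⟩⟩
  calc (G.dist u v : ℝ) ≤ k := by exact_mod_cast hdiam u v
    _ ≤ α * (t + 1) := by
      rw [mul_comm, ← div_le_iff₀ (by linarith)]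
      exact (Nat.lt_floor_add_one _).le
end

section
/- Let G = (V,E) be a finite connected simple graph whose girth is at least g, and let δ = 2|E|/|V| be its average degree. Let s be an integer with 1 < s < g/2. Then for every map f : V → ℓ₂, every real α ≥ 1 and every scaling factor r > 0 such that r·d_G(u,v) ≤ ‖f(u) − f(v)‖ ≤ α·r·d_G(u,v) for all u,v ∈ V with d_G(u,v) ≤ s, one has α ≥ ((δ−2)/δ)·√s. In particular, every α-embedding of (V, d_G) into ℓ₂ satisfies α ≥ ((δ−2)/δ)·√(⌊g/2⌋ − 1). -/
/-!
Run the simple random walk `(Z_t)` on `G` from its stationary law `deg / 2|E|`. Up to half the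
girth the walk sees a tree around `Z_0`: from `Z_t` all neighbours but at most one are one step
farther from `Z_0`, so `E d(Z_0, Z_{t+1}) ≥ E d(Z_0, Z_t) + 1 - 2 E[1 / deg Z_t]`, and
`E[1 / deg Z_t] = |V| / 2|E| = 1 / δ` by stationarity. Hence `E d(Z_0, Z_s) ≥ s (δ - 2) / δ`.
On the other hand Hilbert space has Markov type 2 with constant 1 (K. Ball): the spectral theorem
for the reversible transition matrix gives `E‖f Z_s - f Z_0‖² ≤ s E‖f Z_1 - f Z_0‖² ≤ s (α r)²`,
while `E‖f Z_s - f Z_0‖² ≥ r² E d(Z_0, Z_s)² ≥ r² (E d(Z_0, Z_s))²` by Cauchy–Schwarz.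
-/

open Finset Matrix
open scoped InnerProductSpace

namespace Matrix

variable {n E : Type*} [Fintype n] [NormedAddCommGroup E] [InnerProductSpace ℝ E]

lemma IsHermitian.sum_mul_norm_sub_sq {B : Matrix n n ℝ} (hB : B.IsHermitian) {d : n → ℝ}
    (hd : B *ᵥ d = d) (f : n → E) :
    ∑ x, ∑ v, d x * d v * B x v * ‖f x - f v‖ ^ 2 =
      2 * ∑ x, ‖d x • f x‖ ^ 2 - 2 * ∑ x, ∑ v, B x v * ⟪d x • f x, d v • f v⟫_ℝ := by
  have hrow : ∀ x, ∑ v, d x * d v * B x v * ‖f x‖ ^ 2 = ‖d x • f x‖ ^ 2 := fun x => by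
    have hdx : ∑ v, B x v * d v = d x := congrFun hd x
    calc ∑ v, d x * d v * B x v * ‖f x‖ ^ 2 = d x * (∑ v, B x v * d v) * ‖f x‖ ^ 2 := by
          rw [mul_sum, sum_mul]
          exact sum_congr rfl fun v _ => by ring
      _ = ‖d x • f x‖ ^ 2 := by rw [hdx, norm_smul, Real.norm_eq_abs, mul_pow, sq_abs]; ring
  have hcol : ∀ v, ∑ x, d x * d v * B x v * ‖f v‖ ^ 2 = ‖d v • f v‖ ^ 2 := fun v => by
    rw [← hrow v]
    exact sum_congr rfl fun x _ => by rw [← hB.apply x v, star_trivial]; ring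
  calc ∑ x, ∑ v, d x * d v * B x v * ‖f x - f v‖ ^ 2
      = ∑ x, ∑ v, (d x * d v * B x v * ‖f x‖ ^ 2 + d x * d v * B x v * ‖f v‖ ^ 2
          - 2 * (B x v * ⟪d x • f x, d v • f v⟫_ℝ)) := by
        refine sum_congr rfl fun x _ => sum_congr rfl fun v _ => ?_
        rw [norm_sub_sq_real, real_inner_smul_left, real_inner_smul_right]
        ring
    _ = 2 * ∑ x, ‖d x • f x‖ ^ 2 - 2 * ∑ x, ∑ v, B x v * ⟪d x • f x, d v • f v⟫_ℝ := by
        simp only [sum_sub_distrib, sum_add_distrib, ← mul_sum, hrow]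
        rw [sum_comm (f := fun x v => d x * d v * B x v * ‖f v‖ ^ 2)]
        simp only [hcol]
        ring

lemma IsHermitian.dotProduct_mulVec_le {B : Matrix n n ℝ} (hB : B.IsHermitian)
    (hB₀ : ∀ x v, 0 ≤ B x v) {d : n → ℝ} (hd : B *ᵥ d = d) (hd₀ : ∀ x, 0 < d x) (q : n → ℝ) :
    q ⬝ᵥ (B *ᵥ q) ≤ q ⬝ᵥ q := by
  have hq : ∀ x, d x • (q x / d x) = q x := fun x => by
    rw [smul_eq_mul, mul_div_cancel₀ _ (hd₀ x).ne']
  have key := hB.sum_mul_norm_sub_sq hd fun x => q x / d x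
  simp only [hq, Real.inner_apply, Real.norm_eq_abs, sq_abs] at key
  have hnonneg : 0 ≤ ∑ x, ∑ v, d x * d v * B x v * (q x / d x - q v / d v) ^ 2 :=
    sum_nonneg fun x _ => sum_nonneg fun v _ => by
      have := hd₀ x; have := hd₀ v; have := hB₀ x v; positivity
  have hquad : q ⬝ᵥ (B *ᵥ q) = ∑ x, ∑ v, B x v * (q x * q v) := by
    simp only [dotProduct, mulVec, mul_sum]
    exact sum_congr rfl fun x _ => sum_congr rfl fun v _ => by ring
  have hnorm : q ⬝ᵥ q = ∑ x, q x ^ 2 := sum_congr rfl fun x _ => (sq (q x)).symm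
  linarith

variable [DecidableEq n]

lemma pow_mulVec_eq_self {A : Matrix n n ℝ} {d : n → ℝ} (hd : A *ᵥ d = d) (k : ℕ) :
    (A ^ k) *ᵥ d = d := by
  induction k with
  | zero => exact one_mulVec d
  | succ k ih => rw [pow_succ, ← mulVec_mulVec, hd, ih]

lemma IsHermitian.pow_apply {A : Matrix n n ℝ} (hA : A.IsHermitian) (k : ℕ) (x v : n) :
    (A ^ k) x v =
      ∑ i, hA.eigenvalues i ^ k * hA.eigenvectorBasis i x * hA.eigenvectorBasis i v := by
  conv_lhs => rw [hA.spectral_theorem, ← map_pow, diagonal_pow, Unitary.conjStarAlgAut_apply]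
  simp [mul_apply, diagonal_apply, mul_comm]

lemma IsHermitian.sum_pow_apply_mul_inner {A : Matrix n n ℝ} (hA : A.IsHermitian) (k : ℕ)
    (z : n → E) :
    ∑ x, ∑ v, (A ^ k) x v * ⟪z x, z v⟫_ℝ =
      ∑ i, hA.eigenvalues i ^ k * ‖∑ x, hA.eigenvectorBasis i x • z x‖ ^ 2 := by
  simp_rw [← real_inner_self_eq_norm_sq, sum_inner, inner_sum, real_inner_smul_left,
    real_inner_smul_right, hA.pow_apply, sum_mul, mul_sum]
  refine (sum_congr rfl fun x _ => sum_comm).trans ?_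
  rw [sum_comm]
  exact sum_congr rfl fun i _ => sum_congr rfl fun x _ => sum_congr rfl fun v _ => by
    ring

lemma IsHermitian.neg_one_le_eigenvalues {A : Matrix n n ℝ} (hA : A.IsHermitian)
    (hA₀ : ∀ x v, 0 ≤ A x v) {d : n → ℝ} (hd : A *ᵥ d = d) (hd₀ : ∀ x, 0 < d x) (i : n) :
    -1 ≤ hA.eigenvalues i := by
  set q : n → ℝ := ⇑(hA.eigenvectorBasis i)
  have hq : q ⬝ᵥ q = 1 := by
    have h := real_inner_self_eq_norm_sq (hA.eigenvectorBasis i)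
    rw [hA.eigenvectorBasis.orthonormal.1 i, EuclideanSpace.inner_eq_star_dotProduct] at h
    simpa using h
  have hsq : q ⬝ᵥ ((A ^ 2) *ᵥ q) = hA.eigenvalues i ^ 2 := by
    rw [sq A, ← mulVec_mulVec, hA.mulVec_eigenvectorBasis, mulVec_smul,
      hA.mulVec_eigenvectorBasis]
    change q ⬝ᵥ (_ • _ • q) = _
    rw [dotProduct_smul, dotProduct_smul, hq, smul_eq_mul, smul_eq_mul, mul_one, sq]
  have hle := (hA.pow 2).dotProduct_mulVec_le (pow_apply_nonneg hA₀ 2) (pow_mulVec_eq_self hd 2)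
    hd₀ q
  rw [hsq, hq, sq_le_one_iff_abs_le_one] at hle
  exact (abs_le.mp hle).1

/-- Markov type 2 of Hilbert space for the reversible chain with stationary weights `d²`: in an
eigenbasis of `A` it reduces to Bernoulli's inequality `1 - λ ^ t ≤ t (1 - λ)` for `λ ≥ -1`. -/
theorem IsHermitian.sum_mul_norm_sub_sq_pow_le {A : Matrix n n ℝ} (hA : A.IsHermitian)
    (hev : ∀ i, -1 ≤ hA.eigenvalues i) {d : n → ℝ} (hd : A *ᵥ d = d) (f : n → E) (t : ℕ) :
    ∑ x, ∑ v, d x * d v * (A ^ t) x v * ‖f x - f v‖ ^ 2 ≤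
      t * ∑ x, ∑ v, d x * d v * A x v * ‖f x - f v‖ ^ 2 := by
  set z : n → E := fun x => d x • f x
  set c : n → ℝ := fun i => ‖∑ x, hA.eigenvectorBasis i x • z x‖ ^ 2
  have hparseval : ∑ x, ‖z x‖ ^ 2 = ∑ i, c i := by
    simpa [one_apply, real_inner_self_eq_norm_sq] using hA.sum_pow_apply_mul_inner 0 z
  have henergy : ∀ k : ℕ, ∑ x, ∑ v, d x * d v * (A ^ k) x v * ‖f x - f v‖ ^ 2 =
      2 * ∑ i, (1 - hA.eigenvalues i ^ k) * c i := by
    intro k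
    rw [(hA.pow k).sum_mul_norm_sub_sq (pow_mulVec_eq_self hd k), hparseval,
      hA.sum_pow_apply_mul_inner k z]
    simp only [sub_mul, one_mul, sum_sub_distrib, mul_sub]
    rfl
  have hbernoulli : ∀ i, 1 - hA.eigenvalues i ^ t ≤ t * (1 - hA.eigenvalues i) := fun i => by
    have := one_add_mul_le_pow (by linarith [hev i] : -2 ≤ hA.eigenvalues i - 1) t
    rw [add_sub_cancel] at this
    linarith
  have henergy_one := henergy 1
  simp only [pow_one] at henergy_one
  rw [henergy t, henergy_one, mul_sum, mul_sum, mul_sum]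
  refine sum_le_sum fun i _ => ?_
  nlinarith [hbernoulli i, sq_nonneg ‖∑ x, hA.eigenvectorBasis i x • z x‖]

end Matrix

namespace SimpleGraph

variable {V : Type*} {G : SimpleGraph V}

lemma girth_le_length_add_one_of_adj {u v : V} (h : G.Adj u v) (w : G.Walk u v)
    (hw : s(u, v) ∉ w.edges) : G.girth ≤ w.length + 1 := by
  classical
  have hcycle : (Walk.cons h w.bypass.reverse).IsCycle := by
    rw [Walk.cons_isCycle_iff, Walk.edges_reverse, List.mem_reverse]
    exact ⟨w.bypass_isPath.reverse, fun hb => hw (w.edges_bypass_subset_edges hb)⟩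
  calc G.girth ≤ (Walk.cons h w.bypass.reverse).length := girth_le_length hcycle
    _ ≤ w.length + 1 := by
      simpa only [Walk.length_cons, Walk.length_reverse] using
        Nat.succ_le_succ w.length_bypass_le_length

lemma Walk.notMem_support_of_length_eq_dist [DecidableEq V] {x u v : V} (p : G.Walk x v)
    (hp : p.length = G.dist x v) (huv : u ≠ v) (hd : G.dist x v ≤ G.dist x u) :
    u ∉ p.support := fun hu =>
  ((dist_le (p.takeUntil u hu)).trans_lt (length_takeUntil_lt_length hu huv)).not_ge (hp ▸ hd)

/-- Two such neighbours, joined to `x` by shortest paths, would close a cycle of length at most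
`2 d(x, u) + 2` through `u`. -/
lemma Connected.eq_of_adj_of_dist_le (hG : G.Connected) {x u v₁ v₂ : V}
    (hgirth : 2 * G.dist x u + 2 < G.girth) (h₁ : G.Adj u v₁) (h₂ : G.Adj u v₂)
    (hd₁ : G.dist x v₁ ≤ G.dist x u) (hd₂ : G.dist x v₂ ≤ G.dist x u) : v₁ = v₂ := by
  classical
  by_contra hne
  obtain ⟨p₁, hp₁⟩ := hG.exists_walk_length_eq_dist x v₁
  obtain ⟨p₂, hp₂⟩ := hG.exists_walk_length_eq_dist x v₂
  have hu₁ := p₁.notMem_support_of_length_eq_dist hp₁ h₁.ne hd₁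
  have hu₂ := p₂.notMem_support_of_length_eq_dist hp₂ h₂.ne hd₂
  have hw : s(u, v₁) ∉ (Walk.cons h₂ (p₂.reverse.append p₁)).edges := by
    rw [Walk.edges_cons, List.mem_cons, Sym2.eq_iff, not_or]
    refine ⟨by rintro (⟨-, h⟩ | ⟨h, -⟩) <;> [exact hne h; exact h₂.ne h], fun he => ?_⟩
    have := (p₂.reverse.append p₁).fst_mem_support_of_mem_edges he
    rw [Walk.mem_support_append_iff, Walk.support_reverse, List.mem_reverse] at this
    exact this.elim hu₂ hu₁
  have := girth_le_length_add_one_of_adj h₁ _ hw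
  simp only [Walk.length_cons, Walk.length_append, Walk.length_reverse] at this
  omega

variable [Fintype V]

lemma exists_walk_length_eq_of_pow_apply_ne_zero {R : Type*} [Semiring R] [DecidableEq V]
    {M : Matrix V V R} (hM : ∀ x v, M x v ≠ 0 → G.Adj x v) (k : ℕ) {x v : V}
    (h : (M ^ k) x v ≠ 0) : ∃ p : G.Walk x v, p.length = k := by
  induction k generalizing v with
  | zero =>
    obtain rfl : x = v := by by_contra hxv; exact h (by simp [hxv])
    exact ⟨.nil, rfl⟩
  | succ k ih =>
    rw [pow_succ, Matrix.mul_apply] at h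
    obtain ⟨u, -, hu⟩ := exists_ne_zero_of_sum_ne_zero h
    obtain ⟨p, hp⟩ := ih (left_ne_zero_of_mul hu)
    exact ⟨p.concat (hM u v (right_ne_zero_of_mul hu)), by rw [Walk.length_concat, hp]⟩

variable [DecidableRel G.Adj]

lemma Connected.degree_mul_dist_add_one_le (hG : G.Connected) {x u : V}
    (hgirth : 2 * G.dist x u + 2 < G.girth) :
    G.degree u * (G.dist x u + 1) ≤ ∑ v ∈ G.neighborFinset u, G.dist x v + 2 := by
  classical
  by_cases h : ∃ v₀ ∈ G.neighborFinset u, G.dist x v₀ ≤ G.dist x u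
  · obtain ⟨v₀, hv₀, hd₀⟩ := h
    rw [mem_neighborFinset] at hv₀
    have hfar : ∀ v ∈ (G.neighborFinset u).erase v₀, G.dist x u + 1 ≤ G.dist x v := by
      intro v hv
      rw [mem_erase, mem_neighborFinset] at hv
      by_contra! hle
      exact hv.1 (hG.eq_of_adj_of_dist_le hgirth hv.2 hv₀ (by omega) hd₀)
    have hnear : G.dist x u ≤ G.dist x v₀ + 1 := by
      simpa [dist_eq_one_iff_adj.mpr hv₀.symm] using hG.dist_triangle (u := x) (v := v₀) (w := u)
    have hsum := card_nsmul_le_sum _ (fun v => G.dist x v) _ hfar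
    rw [← add_sum_erase _ _ ((mem_neighborFinset _ _ _).mpr hv₀), smul_eq_mul,
      card_erase_of_mem ((mem_neighborFinset _ _ _).mpr hv₀),
      card_neighborFinset_eq_degree] at *
    obtain ⟨k, hk⟩ := Nat.exists_eq_add_one.mpr ((G.degree_pos_iff_exists_adj u).mpr ⟨v₀, hv₀⟩)
    rw [hk, Nat.add_sub_cancel] at hsum
    rw [hk, add_one_mul]
    omega
  · simp only [not_exists, not_and, not_le] at h
    have := card_nsmul_le_sum (G.neighborFinset u) (fun v => G.dist x v) (G.dist x u + 1) h
    rw [smul_eq_mul, card_neighborFinset_eq_degree] at this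
    omega

variable (G)

noncomputable def normalizedAdjMatrix : Matrix V V ℝ :=
  Matrix.of fun x v => if G.Adj x v then (√(G.degree x) * √(G.degree v))⁻¹ else 0

lemma isHermitian_normalizedAdjMatrix : G.normalizedAdjMatrix.IsHermitian := by
  ext x v
  simp [normalizedAdjMatrix, G.adj_comm, mul_comm]

lemma normalizedAdjMatrix_nonneg (x v : V) : 0 ≤ G.normalizedAdjMatrix x v := by
  simp only [normalizedAdjMatrix, of_apply]
  split_ifs <;> positivity

lemma adj_of_normalizedAdjMatrix_ne_zero {x v : V} (h : G.normalizedAdjMatrix x v ≠ 0) :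
    G.Adj x v := by
  by_contra hxv
  simp [normalizedAdjMatrix, hxv] at h

lemma normalizedAdjMatrix_mul_sqrt_degree (x v : V) :
    G.normalizedAdjMatrix x v * √(G.degree v) = if G.Adj x v then (√(G.degree x))⁻¹ else 0 := by
  by_cases hxv : G.Adj x v
  · have : 0 < √(G.degree v) :=
      Real.sqrt_pos.mpr (Nat.cast_pos.mpr ((G.degree_pos_iff_exists_adj v).mpr ⟨x, hxv.symm⟩))
    simp only [normalizedAdjMatrix, of_apply, if_pos hxv]
    field_simp
  · simp [normalizedAdjMatrix, hxv]

lemma sum_normalizedAdjMatrix_mul_sqrt_degree_mul (x : V) (φ : V → ℝ) :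
    ∑ v, G.normalizedAdjMatrix x v * √(G.degree v) * φ v =
      (√(G.degree x))⁻¹ * ∑ v ∈ G.neighborFinset x, φ v := by
  simp only [normalizedAdjMatrix_mul_sqrt_degree, ite_mul, zero_mul, ← sum_filter,
    ← neighborFinset_eq_filter, mul_sum]

lemma normalizedAdjMatrix_mulVec_sqrt_degree :
    G.normalizedAdjMatrix *ᵥ (fun v => √(G.degree v)) = fun v => √(G.degree v) := by
  funext x
  have := G.sum_normalizedAdjMatrix_mul_sqrt_degree_mul x 1
  simp only [Pi.one_apply, mul_one, sum_const, card_neighborFinset_eq_degree, nsmul_eq_mul] at this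
  rw [mulVec, dotProduct, this, inv_mul_eq_div, Real.div_sqrt]

variable [DecidableEq V]

/-- `walkWeight k x v = deg x · P^k(x, v)` for the transition matrix `P` of the simple random walk,
that is `2|E|` times the probability that the stationary walk is at `x` at time `0` and at `v` at
time `k`. Writing it as `D^{1/2} S^k D^{1/2}`, with `S = normalizedAdjMatrix` symmetric, makes the
spectral theorem available. -/
noncomputable def walkWeight (k : ℕ) (x v : V) : ℝ :=
  √(G.degree x) * √(G.degree v) * (G.normalizedAdjMatrix ^ k) x v

lemma walkWeight_nonneg (k : ℕ) (x v : V) : 0 ≤ G.walkWeight k x v :=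
  mul_nonneg (by positivity) (pow_apply_nonneg G.normalizedAdjMatrix_nonneg k x v)

lemma walkWeight_comm (k : ℕ) (x v : V) : G.walkWeight k x v = G.walkWeight k v x := by
  rw [walkWeight, walkWeight, ← (G.isHermitian_normalizedAdjMatrix.pow k).apply v x, star_trivial,
    mul_comm √(G.degree x)]

lemma sum_walkWeight (k : ℕ) (x : V) : ∑ v, G.walkWeight k x v = G.degree x := by
  have := congrFun (pow_mulVec_eq_self G.normalizedAdjMatrix_mulVec_sqrt_degree k) x
  simp only [mulVec, dotProduct] at this
  calc ∑ v, G.walkWeight k x v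
      = √(G.degree x) * ∑ v, (G.normalizedAdjMatrix ^ k) x v * √(G.degree v) := by
        simp only [walkWeight, mul_sum]
        exact sum_congr rfl fun v _ => by ring
    _ = G.degree x := by rw [this, Real.mul_self_sqrt (Nat.cast_nonneg _)]

lemma walkWeight_one (x v : V) : G.walkWeight 1 x v = if G.Adj x v then 1 else 0 := by
  have : G.walkWeight 1 x v = √(G.degree x) * (G.normalizedAdjMatrix x v * √(G.degree v)) := by
    rw [walkWeight, pow_one]
    ring
  rw [this, normalizedAdjMatrix_mul_sqrt_degree]
  by_cases hxv : G.Adj x v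
  · have : 0 < √(G.degree x) :=
      Real.sqrt_pos.mpr (Nat.cast_pos.mpr ((G.degree_pos_iff_exists_adj x).mpr ⟨v, hxv⟩))
    simp [hxv, this.ne']
  · simp [hxv]

lemma sum_walkWeight_succ_mul (k : ℕ) (x : V) (φ : V → ℝ) :
    ∑ v, G.walkWeight (k + 1) x v * φ v =
      ∑ u, G.walkWeight k x u * ((G.degree u : ℝ)⁻¹ * ∑ v ∈ G.neighborFinset u, φ v) := by
  simp only [walkWeight, pow_succ, mul_apply, mul_sum, sum_mul]
  rw [sum_comm]
  refine sum_congr rfl fun u _ => ?_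
  calc ∑ v, √(G.degree x) * √(G.degree v) *
        ((G.normalizedAdjMatrix ^ k) x u * G.normalizedAdjMatrix u v) * φ v
      = √(G.degree x) * (G.normalizedAdjMatrix ^ k) x u *
          ∑ v, G.normalizedAdjMatrix u v * √(G.degree v) * φ v := by
        rw [mul_sum]
        exact sum_congr rfl fun v _ => by ring
    _ = _ := by
        rw [sum_normalizedAdjMatrix_mul_sqrt_degree_mul, ← Real.sqrt_div_self, mul_sum, mul_sum]
        exact sum_congr rfl fun v _ => by ring

lemma dist_le_of_walkWeight_ne_zero {k : ℕ} {x v : V} (h : G.walkWeight k x v ≠ 0) :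
    G.dist x v ≤ k := by
  obtain ⟨p, hp⟩ := exists_walk_length_eq_of_pow_apply_ne_zero
    (fun _ _ => G.adj_of_normalizedAdjMatrix_ne_zero) k (right_ne_zero_of_mul h)
  exact hp ▸ dist_le p

lemma sum_sum_walkWeight (k : ℕ) : ∑ x, ∑ v, G.walkWeight k x v = 2 * #G.edgeFinset := by
  simp only [sum_walkWeight]
  exact_mod_cast G.sum_degrees_eq_twice_card_edges

lemma sum_sum_walkWeight_mul_inv_degree (hdeg : ∀ v, 0 < G.degree v) (k : ℕ) :
    ∑ x, ∑ v, G.walkWeight k x v * (G.degree v : ℝ)⁻¹ = Fintype.card V := by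
  rw [sum_comm]
  calc ∑ v, ∑ x, G.walkWeight k x v * (G.degree v : ℝ)⁻¹ = ∑ _v : V, (1 : ℝ) :=
        sum_congr rfl fun v _ => by
          simp only [← sum_mul, G.walkWeight_comm k _ v, sum_walkWeight]
          exact mul_inv_cancel₀ (Nat.cast_pos.mpr (hdeg v)).ne'
    _ = Fintype.card V := by simp

variable {G}

/-- `2|E| - 2|V| = ∑ u, deg u (1 - 2 / deg u)`, and a step of the walk from `u` moves away from `x`
along all edges at `u` but at most one. -/
lemma Connected.sum_walkWeight_mul_dist_add_le (hG : G.Connected) (hdeg : ∀ v, 0 < G.degree v)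
    {k : ℕ} (hk : 2 * k + 2 < G.girth) :
    ∑ x, ∑ v, G.walkWeight k x v * G.dist x v + (2 * #G.edgeFinset - 2 * Fintype.card V) ≤
      ∑ x, ∑ v, G.walkWeight (k + 1) x v * G.dist x v := by
  have hstep : ∀ x u, G.walkWeight k x u * (G.dist x u + 1 - 2 * (G.degree u : ℝ)⁻¹) ≤
      G.walkWeight k x u * ((G.degree u : ℝ)⁻¹ * ∑ v ∈ G.neighborFinset u, (G.dist x v : ℝ)) := by
    intro x u
    rcases eq_or_ne (G.walkWeight k x u) 0 with h | h
    · simp [h]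
    refine mul_le_mul_of_nonneg_left ?_ (G.walkWeight_nonneg k x u)
    have hdist := G.dist_le_of_walkWeight_ne_zero h
    have hsum : (G.degree u * (G.dist x u + 1) : ℝ) ≤
        ∑ v ∈ G.neighborFinset u, (G.dist x v : ℝ) + 2 := by
      exact_mod_cast hG.degree_mul_dist_add_one_le (x := x) (u := u) (by omega)
    have hdu : (0 : ℝ) < G.degree u := Nat.cast_pos.mpr (hdeg u)
    rw [le_inv_mul_iff₀ hdu, mul_sub, mul_left_comm, mul_inv_cancel₀ hdu.ne']
    linarith
  calc ∑ x, ∑ v, G.walkWeight k x v * G.dist x v + (2 * #G.edgeFinset - 2 * Fintype.card V)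
      = ∑ x, ∑ u, G.walkWeight k x u * (G.dist x u + 1 - 2 * (G.degree u : ℝ)⁻¹) := by
        simp only [mul_sub, mul_add, mul_one, sum_sub_distrib, sum_add_distrib,
          sum_sum_walkWeight, mul_left_comm _ (2 : ℝ), ← mul_sum,
          G.sum_sum_walkWeight_mul_inv_degree hdeg]
        ring
    _ ≤ _ := sum_le_sum fun x _ => sum_le_sum fun u _ => hstep x u
    _ = _ := sum_congr rfl fun x _ => (G.sum_walkWeight_succ_mul k x _).symm

lemma Connected.mul_le_sum_walkWeight_mul_dist (hG : G.Connected) (hdeg : ∀ v, 0 < G.degree v)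
    {s : ℕ} (hs : 2 * s < G.girth) :
    s * (2 * #G.edgeFinset - 2 * Fintype.card V : ℝ) ≤
      ∑ x, ∑ v, G.walkWeight s x v * G.dist x v := by
  induction s with
  | zero =>
    simpa using sum_nonneg fun x _ => sum_nonneg fun v _ =>
      mul_nonneg (G.walkWeight_nonneg 0 x v) (Nat.cast_nonneg (G.dist x v))
  | succ k ih =>
    have := hG.sum_walkWeight_mul_dist_add_le hdeg (by omega)
    have := ih (by omega)
    push_cast
    linarith

lemma sum_walkWeight_mul_norm_sub_sq_le {E : Type*} [NormedAddCommGroup E]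
    [InnerProductSpace ℝ E] (hdeg : ∀ v, 0 < G.degree v) (f : V → E) (t : ℕ) :
    ∑ x, ∑ v, G.walkWeight t x v * ‖f x - f v‖ ^ 2 ≤
      t * ∑ x, ∑ v, G.walkWeight 1 x v * ‖f x - f v‖ ^ 2 := by
  have hS := G.isHermitian_normalizedAdjMatrix
  have hev := hS.neg_one_le_eigenvalues G.normalizedAdjMatrix_nonneg
    G.normalizedAdjMatrix_mulVec_sqrt_degree fun v => Real.sqrt_pos.mpr (Nat.cast_pos.mpr (hdeg v))
  simpa [walkWeight] using
    hS.sum_mul_norm_sub_sq_pow_le hev G.normalizedAdjMatrix_mulVec_sqrt_degree f t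

lemma sq_sum_walkWeight_mul_le (k : ℕ) (φ : V → V → ℝ) :
    (∑ x, ∑ v, G.walkWeight k x v * φ x v) ^ 2 ≤
      2 * #G.edgeFinset * ∑ x, ∑ v, G.walkWeight k x v * φ x v ^ 2 := by
  rw [← sum_sum_walkWeight G k]
  simp only [← Fintype.sum_prod_type']
  exact sum_sq_le_sum_mul_sum_of_sq_le_mul _ (fun p _ => G.walkWeight_nonneg k p.1 p.2)
    (fun p _ => mul_nonneg (G.walkWeight_nonneg k p.1 p.2) (sq_nonneg _))
    fun p _ => le_of_eq (by ring)

lemma mul_sum_walkWeight_mul_sq_dist_le {E : Type*} [SeminormedAddCommGroup E] (f : V → E)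
    {k : ℕ} {r : ℝ} (hr : 0 ≤ r) (hf : ∀ u v, G.dist u v ≤ k → r * G.dist u v ≤ ‖f u - f v‖) :
    r ^ 2 * ∑ x, ∑ v, G.walkWeight k x v * (G.dist x v : ℝ) ^ 2 ≤
      ∑ x, ∑ v, G.walkWeight k x v * ‖f x - f v‖ ^ 2 := by
  simp only [mul_sum]
  refine sum_le_sum fun x _ => sum_le_sum fun v _ => ?_
  rcases eq_or_ne (G.walkWeight k x v) 0 with h | h
  · simp [h]
  have hle := pow_le_pow_left₀ (by positivity) (hf x v (G.dist_le_of_walkWeight_ne_zero h)) 2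
  calc r ^ 2 * (G.walkWeight k x v * (G.dist x v : ℝ) ^ 2)
      = G.walkWeight k x v * (r * G.dist x v) ^ 2 := by ring
    _ ≤ G.walkWeight k x v * ‖f x - f v‖ ^ 2 :=
      mul_le_mul_of_nonneg_left hle (G.walkWeight_nonneg k x v)

lemma sum_walkWeight_one_mul_norm_sub_sq_le {E : Type*} [SeminormedAddCommGroup E] (f : V → E)
    {L : ℝ} (hf : ∀ u v, G.Adj u v → ‖f u - f v‖ ≤ L) :
    ∑ x, ∑ v, G.walkWeight 1 x v * ‖f x - f v‖ ^ 2 ≤ 2 * #G.edgeFinset * L ^ 2 := by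
  rw [← sum_sum_walkWeight G 1, sum_mul]
  refine sum_le_sum fun x _ => ?_
  rw [sum_mul]
  refine sum_le_sum fun v _ => ?_
  rw [walkWeight_one]
  split_ifs with hxv
  · simpa using pow_le_pow_left₀ (norm_nonneg _) (hf x v hxv) 2
  · simp

theorem Connected.sub_div_mul_sqrt_le {E : Type*} [NormedAddCommGroup E] [InnerProductSpace ℝ E]
    (hG : G.Connected) {s : ℕ} (hs : 2 * s < G.girth) (f : V → E) {α r : ℝ} (hα : 0 ≤ α)
    (hr : 0 < r) (hf : ∀ u v, G.dist u v ≤ s →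
      r * G.dist u v ≤ ‖f u - f v‖ ∧ ‖f u - f v‖ ≤ α * r * G.dist u v) :
    ((#G.edgeFinset : ℝ) - Fintype.card V) / #G.edgeFinset * √s ≤ α := by
  set m : ℝ := (#G.edgeFinset : ℝ)
  set n : ℝ := (Fintype.card V : ℝ)
  rcases le_or_gt m n with hmn | hmn
  · exact (mul_nonpos_of_nonpos_of_nonneg (div_nonpos_of_nonpos_of_nonneg (by linarith)
      (by positivity)) (Real.sqrt_nonneg _)).trans hα
  rcases Nat.eq_zero_or_pos s with rfl | hs₀
  · simpa using hα
  have hm : 0 < m := hmn.trans_le' (by positivity)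
  have hdeg : ∀ v, 0 < G.degree v := by
    obtain ⟨a, b, hab⟩ := ne_bot_iff_exists_adj.mp
      (edgeFinset_nonempty.mp (card_pos.mp (Nat.cast_pos.mp hm)))
    have : Nontrivial V := ⟨a, b, hab.ne⟩
    exact fun v => hG.preconnected.degree_pos_of_nontrivial v
  have hedge : ∀ u v, G.Adj u v → ‖f u - f v‖ ≤ α * r := fun u v huv => by
    have hd : G.dist u v = 1 := dist_eq_one_iff_adj.mpr huv
    simpa [hd] using (hf u v (by omega)).2
  have hdist_sq : ∑ x, ∑ v, G.walkWeight s x v * (G.dist x v : ℝ) ^ 2 ≤ s * (2 * m * α ^ 2) := by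
    refine le_of_mul_le_mul_left ?_ (by positivity : 0 < r ^ 2)
    calc r ^ 2 * ∑ x, ∑ v, G.walkWeight s x v * (G.dist x v : ℝ) ^ 2
        ≤ ∑ x, ∑ v, G.walkWeight s x v * ‖f x - f v‖ ^ 2 :=
          G.mul_sum_walkWeight_mul_sq_dist_le f hr.le fun u v h => (hf u v h).1
      _ ≤ s * ∑ x, ∑ v, G.walkWeight 1 x v * ‖f x - f v‖ ^ 2 :=
          G.sum_walkWeight_mul_norm_sub_sq_le hdeg f s
      _ ≤ s * (2 * m * (α * r) ^ 2) :=
          mul_le_mul_of_nonneg_left (G.sum_walkWeight_one_mul_norm_sub_sq_le f hedge)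
            (Nat.cast_nonneg s)
      _ = r ^ 2 * (s * (2 * m * α ^ 2)) := by ring
  have key : s * (m - n) ^ 2 ≤ m ^ 2 * α ^ 2 := by
    have : (s * (2 * m - 2 * n)) ^ 2 ≤ 2 * m * (s * (2 * m * α ^ 2)) :=
      calc (s * (2 * m - 2 * n)) ^ 2 ≤ (∑ x, ∑ v, G.walkWeight s x v * G.dist x v) ^ 2 :=
            pow_le_pow_left₀ (by nlinarith) (hG.mul_le_sum_walkWeight_mul_dist hdeg hs) 2
        _ ≤ 2 * m * ∑ x, ∑ v, G.walkWeight s x v * (G.dist x v : ℝ) ^ 2 :=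
            G.sq_sum_walkWeight_mul_le s _
        _ ≤ 2 * m * (s * (2 * m * α ^ 2)) := by gcongr
    refine le_of_mul_le_mul_left ?_ (by positivity : (0 : ℝ) < 4 * s)
    linear_combination this
  have hc : 0 ≤ (m - n) / m := div_nonneg (by linarith) hm.le
  rw [← pow_le_pow_iff_left₀ (mul_nonneg hc (Real.sqrt_nonneg _)) hα two_ne_zero, mul_pow,
    Real.sq_sqrt (Nat.cast_nonneg _), div_pow, div_mul_eq_mul_div, div_le_iff₀ (by positivity)]
  linarith

end SimpleGraph

/-- Distortion lower bound for graphs of large girth via the average degree `δ`: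
any embedding of `(V, d_G)` into `ℓ₂` which has distortion `α` at distances up to `s`
(for an integer `1 < s < g/2`) satisfies `α ≥ ((δ-2)/δ)·√s`; in particular any
`α`-embedding of the whole graph satisfies `α ≥ ((δ-2)/δ)·√(⌊g/2⌋ - 1)`. -/
theorem girth_average_degree_distortion
    (V : Type) [Fintype V] [DecidableEq V] (G : SimpleGraph V) [DecidableRel G.Adj]
    (g s : ℕ) (δ : ℝ)
    (hconn : G.Connected) (hgirth : (g : ℕ∞) ≤ G.girth)
    (hδ : δ = 2 * (G.edgeFinset.card : ℝ) / (Fintype.card V : ℝ))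
    (hs1 : 1 < s) (hs2 : 2 * s < g) :
    (∀ (f : V → lp (fun _ : ℕ => ℝ) 2) (α r : ℝ), 1 ≤ α → 0 < r →
      (∀ u v : V, G.dist u v ≤ s →
        r * (G.dist u v : ℝ) ≤ ‖f u - f v‖ ∧ ‖f u - f v‖ ≤ α * r * (G.dist u v : ℝ)) →
      (δ - 2) / δ * Real.sqrt s ≤ α) ∧
    (∀ (f : V → lp (fun _ : ℕ => ℝ) 2) (α r : ℝ), 1 ≤ α → 0 < r →
      (∀ u v : V,
        r * (G.dist u v : ℝ) ≤ ‖f u - f v‖ ∧ ‖f u - f v‖ ≤ α * r * (G.dist u v : ℝ)) →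
      (δ - 2) / δ * Real.sqrt ((g / 2 : ℕ) - 1 : ℝ) ≤ α) := by
  have hgirth' : ∀ t, 2 * t < g → 2 * t < G.girth := fun t ht =>
    ht.trans_le (by exact_mod_cast hgirth)
  have hratio : (δ - 2) / δ = ((#G.edgeFinset : ℝ) - Fintype.card V) / #G.edgeFinset := by
    have : Nonempty V := hconn.nonempty
    have hn : (Fintype.card V : ℝ) ≠ 0 := Nat.cast_ne_zero.mpr Fintype.card_ne_zero
    rcases eq_or_ne (#G.edgeFinset : ℝ) 0 with hm | hm
    · simp [hδ, hm]
    · rw [hδ]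
      field_simp
  refine ⟨fun f α r hα hr hf => ?_, fun f α r hα hr hf => ?_⟩
  · rw [hratio]
    exact hconn.sub_div_mul_sqrt_le (hgirth' s hs2) f (by linarith) hr hf
  · have hcast : ((g / 2 : ℕ) : ℝ) - 1 = ((g / 2 - 1 : ℕ) : ℝ) := by
      rw [Nat.cast_sub (by omega), Nat.cast_one]
    rw [hratio, hcast]
    exact hconn.sub_div_mul_sqrt_le (hgirth' _ (by omega)) f (by linarith) hr fun u v _ => hf u v
end

section
/- Every finite metric space (X,d) satisfying the strong triangle inequality d(x,z) ≤ max(d(x,y), d(y,z)) for all x,y,z ∈ X admits an isometric embedding into ℓ₂, i.e., there exists f : X → ℓ₂ with ‖f(x) − f(y)‖ = d(x,y) for all x,y ∈ X. -/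
open Finset
open scoped RealInnerProductSpace

section Aux

variable (X : Type) [MetricSpace X] [Fintype X]

/-- The (finite) set of all distance values, together with `0`. -/
noncomputable def um_distSet : Finset ℝ :=
  insert 0 (Finset.image (fun p : X × X => dist p.1 p.2) Finset.univ)

lemma um_distSet_nonneg : ∀ r ∈ um_distSet X, 0 ≤ r := by
  intro r hr
  rcases Finset.mem_insert.1 hr with h | h
  · simp [h]
  · rcases Finset.mem_image.1 h with ⟨p, _, rfl⟩
    exact dist_nonneg

lemma um_zero_mem_distSet : (0 : ℝ) ∈ um_distSet X := Finset.mem_insert_self _ _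

lemma um_dist_mem_distSet (x y : X) : dist x y ∈ um_distSet X :=
  Finset.mem_insert_of_mem (Finset.mem_image.2 ⟨(x, y), Finset.mem_univ _, rfl⟩)

/-- The largest element of `um_distSet` strictly below `s` (equals `0` when undefined). -/
noncomputable def um_pred (s : ℝ) : ℝ :=
  if h : ((um_distSet X).filter (fun r => r < s)).Nonempty
  then ((um_distSet X).filter (fun r => r < s)).max' h else 0

lemma um_filter_nonempty {s : ℝ} (hs : 0 < s) :
    ((um_distSet X).filter (fun r => r < s)).Nonempty :=
  ⟨0, Finset.mem_filter.2 ⟨um_zero_mem_distSet X, hs⟩⟩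

lemma um_pred_eq {s : ℝ} (hs : 0 < s) :
    um_pred X s
      = ((um_distSet X).filter (fun r => r < s)).max' (um_filter_nonempty X hs) := by
  rw [um_pred, dif_pos (um_filter_nonempty X hs)]

lemma um_pred_mem {s : ℝ} (hs : 0 < s) : um_pred X s ∈ um_distSet X := by
  rw [um_pred_eq X hs]
  exact (Finset.mem_filter.1 (Finset.max'_mem
    ((um_distSet X).filter (fun r => r < s)) (um_filter_nonempty X hs))).1

lemma um_pred_lt {s : ℝ} (hs : 0 < s) : um_pred X s < s := by
  rw [um_pred_eq X hs]
  exact (Finset.mem_filter.1 (Finset.max'_mem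
    ((um_distSet X).filter (fun r => r < s)) (um_filter_nonempty X hs))).2

lemma um_le_pred {s r : ℝ} (hs : 0 < s) (hr : r ∈ um_distSet X) (hrs : r < s) :
    r ≤ um_pred X s := by
  rw [um_pred_eq X hs]
  exact Finset.le_max' ((um_distSet X).filter (fun r => r < s)) r
    (Finset.mem_filter.2 ⟨hr, hrs⟩)

lemma um_pred_nonneg {s : ℝ} (hs : 0 < s) : 0 ≤ um_pred X s :=
  um_le_pred X hs (um_zero_mem_distSet X) hs

lemma um_pred_sq_le {s : ℝ} (hs : 0 < s) : (um_pred X s) ^ 2 ≤ s ^ 2 := by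
  have h1 := um_pred_nonneg X hs
  have h2 := um_pred_lt X hs
  nlinarith

/-- Size of the open ball of radius `s` around `x`. -/
noncomputable def um_N (s : ℝ) (x : X) : ℕ :=
  (Finset.univ.filter (fun w => dist x w < s)).card

lemma um_N_pos {s : ℝ} (hs : 0 < s) (x : X) : 0 < um_N X s x :=
  Finset.card_pos.2 ⟨x, Finset.mem_filter.2 ⟨Finset.mem_univ _, by simpa using hs⟩⟩

/-- The coordinate of the embedding at scale `s` and "direction" `z`. -/
noncomputable def um_coef (s : ℝ) (x z : X) : ℝ :=
  if 0 < s ∧ dist x z < s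
  then Real.sqrt ((s ^ 2 - (um_pred X s) ^ 2) / 2) / Real.sqrt (um_N X s x)
  else 0

lemma um_ball_eq (hultra : ∀ x y z : X, dist x z ≤ max (dist x y) (dist y z))
    {s : ℝ} {x y : X} (hxy : dist x y < s) (w : X) :
    dist x w < s ↔ dist y w < s := by
  constructor
  · intro h
    exact lt_of_le_of_lt (hultra y x w) (max_lt (by rwa [dist_comm]) h)
  · intro h
    exact lt_of_le_of_lt (hultra x y w) (max_lt hxy h)

lemma um_sum_coef_sq {s : ℝ} (hs : 0 < s) (x : X) :
    ∑ z : X, (um_coef X s x z) ^ 2 = (s ^ 2 - (um_pred X s) ^ 2) / 2 := by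
  have hNpos : (0 : ℝ) < (um_N X s x : ℝ) := by exact_mod_cast um_N_pos X hs x
  have hc : ∀ z : X, (um_coef X s x z) ^ 2 =
      if dist x z < s then ((s ^ 2 - (um_pred X s) ^ 2) / 2) / (um_N X s x : ℝ) else 0 := by
    intro z
    by_cases h : dist x z < s
    · rw [um_coef, if_pos ⟨hs, h⟩, if_pos h, div_pow,
        Real.sq_sqrt (by have := um_pred_sq_le X hs; linarith),
        Real.sq_sqrt (le_of_lt hNpos)]
    · rw [um_coef, if_neg (by tauto), if_neg h]
      ring
  calc ∑ z : X, (um_coef X s x z) ^ 2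
      = ∑ z : X, if dist x z < s
          then ((s ^ 2 - (um_pred X s) ^ 2) / 2) / (um_N X s x : ℝ) else 0 :=
        Finset.sum_congr rfl (fun z _ => hc z)
    _ = ∑ _z ∈ Finset.univ.filter (fun w => dist x w < s),
          ((s ^ 2 - (um_pred X s) ^ 2) / 2) / (um_N X s x : ℝ) := (Finset.sum_filter _ _).symm
    _ = (um_N X s x : ℝ) * (((s ^ 2 - (um_pred X s) ^ 2) / 2) / (um_N X s x : ℝ)) := by
        rw [Finset.sum_const, nsmul_eq_mul]; rfl
    _ = (s ^ 2 - (um_pred X s) ^ 2) / 2 := by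
        field_simp

/-- The key per-scale computation. -/
lemma um_scale_sum (hultra : ∀ x y z : X, dist x z ≤ max (dist x y) (dist y z))
    (s : ℝ) (x y : X) :
    ∑ z : X, (um_coef X s x z - um_coef X s y z) ^ 2
      = if 0 < s ∧ s ≤ dist x y then s ^ 2 - (um_pred X s) ^ 2 else 0 := by
  by_cases hs : 0 < s
  · by_cases hxy : dist x y < s
    · -- the two balls coincide, so all coordinates coincide
      have hN : um_N X s x = um_N X s y := by
        unfold um_N
        congr 1
        apply Finset.filter_congr
        intro w _
        simpa using um_ball_eq X hultra hxy w
      have hcoef : ∀ z, um_coef X s x z = um_coef X s y z := by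
        intro z
        rw [um_coef, um_coef, hN]
        refine if_congr ?_ rfl rfl
        have := um_ball_eq X hultra hxy z
        tauto
      rw [if_neg (by intro h; exact absurd hxy (not_lt.2 h.2))]
      apply Finset.sum_eq_zero
      intro z _
      rw [hcoef z, sub_self]
      ring
    · -- disjoint supports
      have hxy' : s ≤ dist x y := not_lt.1 hxy
      have hdisj : ∀ z : X, um_coef X s x z * um_coef X s y z = 0 := by
        intro z
        by_cases h1 : dist x z < s
        · have h2 : ¬ dist y z < s := by
            intro h2
            have : dist x y < s := by
              refine lt_of_le_of_lt (hultra x z y) (max_lt h1 ?_)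
              rwa [dist_comm]
            exact absurd this (not_lt.2 hxy')
          have hy0 : um_coef X s y z = 0 := by
            rw [um_coef]; exact if_neg (by tauto)
          rw [hy0, mul_zero]
        · have hx0 : um_coef X s x z = 0 := by
            rw [um_coef]; exact if_neg (by tauto)
          rw [hx0, zero_mul]
      have hsplit : ∀ z : X, (um_coef X s x z - um_coef X s y z) ^ 2
          = (um_coef X s x z) ^ 2 + (um_coef X s y z) ^ 2 := by
        intro z
        have := hdisj z
        nlinarith [hdisj z]
      rw [if_pos ⟨hs, hxy'⟩]
      calc ∑ z : X, (um_coef X s x z - um_coef X s y z) ^ 2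
          = ∑ z : X, ((um_coef X s x z) ^ 2 + (um_coef X s y z) ^ 2) :=
            Finset.sum_congr rfl (fun z _ => hsplit z)
        _ = (∑ z : X, (um_coef X s x z) ^ 2) + ∑ z : X, (um_coef X s y z) ^ 2 :=
            Finset.sum_add_distrib
        _ = (s ^ 2 - (um_pred X s) ^ 2) / 2 + (s ^ 2 - (um_pred X s) ^ 2) / 2 := by
            rw [um_sum_coef_sq X hs, um_sum_coef_sq X hs]
        _ = s ^ 2 - (um_pred X s) ^ 2 := by ring
  · rw [if_neg (by tauto)]
    apply Finset.sum_eq_zero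
    intro z _
    rw [um_coef, um_coef, if_neg (by tauto), if_neg (by tauto), sub_self]
    ring

/-- The telescoping sum along scales. -/
lemma um_tele : ∀ (n : ℕ) (t : ℝ), t ∈ um_distSet X →
    ((um_distSet X).filter (fun s => 0 < s ∧ s ≤ t)).card ≤ n →
    ∑ s ∈ (um_distSet X).filter (fun s => 0 < s ∧ s ≤ t), (s ^ 2 - (um_pred X s) ^ 2)
      = t ^ 2 := by
  intro n
  induction n with
  | zero =>
    intro t ht hcard
    have ht0 : ¬ (0 < t) := by
      intro h
      have : t ∈ (um_distSet X).filter (fun s => 0 < s ∧ s ≤ t) :=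
        Finset.mem_filter.2 ⟨ht, h, le_refl t⟩
      have := Finset.card_pos.2 ⟨t, this⟩
      omega
    have ht' : t = 0 := le_antisymm (not_lt.1 ht0) (um_distSet_nonneg X t ht)
    have hempty : (um_distSet X).filter (fun s => 0 < s ∧ s ≤ t) = ∅ := by
      apply Finset.filter_false_of_mem
      intro s _hs h
      subst ht'
      linarith [h.1, h.2]
    rw [hempty, Finset.sum_empty, ht']
    ring
  | succ n ih =>
    intro t ht hcard
    by_cases htpos : 0 < t
    · set p := um_pred X t with hp
      have hpmem : p ∈ um_distSet X := um_pred_mem X htpos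
      have hplt : p < t := um_pred_lt X htpos
      have hins : (um_distSet X).filter (fun s => 0 < s ∧ s ≤ t)
          = insert t ((um_distSet X).filter (fun s => 0 < s ∧ s ≤ p)) := by
        ext s
        simp only [Finset.mem_filter, Finset.mem_insert]
        constructor
        · rintro ⟨hsD, hs0, hst⟩
          rcases eq_or_lt_of_le hst with h | h
          · exact Or.inl h
          · exact Or.inr ⟨hsD, hs0, um_le_pred X htpos hsD h⟩
        · rintro (rfl | ⟨hsD, hs0, hsp⟩)
          · exact ⟨ht, htpos, le_refl _⟩
          · exact ⟨hsD, hs0, le_trans hsp (le_of_lt hplt)⟩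
      have hnotmem : t ∉ (um_distSet X).filter (fun s => 0 < s ∧ s ≤ p) := by
        intro h
        have := (Finset.mem_filter.1 h).2.2
        linarith
      have hcard' : ((um_distSet X).filter (fun s => 0 < s ∧ s ≤ p)).card ≤ n := by
        have : ((um_distSet X).filter (fun s => 0 < s ∧ s ≤ t)).card
            = ((um_distSet X).filter (fun s => 0 < s ∧ s ≤ p)).card + 1 := by
          rw [hins, Finset.card_insert_of_notMem hnotmem]
        omega
      rw [hins, Finset.sum_insert hnotmem, ih p hpmem hcard']
      ring
    · have ht' : t = 0 := le_antisymm (not_lt.1 htpos) (um_distSet_nonneg X t ht)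
      have hempty : (um_distSet X).filter (fun s => 0 < s ∧ s ≤ t) = ∅ := by
        apply Finset.filter_false_of_mem
        intro s _hs h
        subst ht'
        linarith [h.1, h.2]
      rw [hempty, Finset.sum_empty, ht']
      ring

end Aux

/-- Every finite ultrametric space embeds isometrically into `ℓ₂`. -/
theorem ultrametric_isometric_embedding_l2
    (X : Type) [MetricSpace X] [Fintype X]
    (hultra : ∀ x y z : X, dist x z ≤ max (dist x y) (dist y z)) :
    ∃ f : X → lp (fun _ : ℕ => ℝ) 2, ∀ x y : X, ‖f x - f y‖ = dist x y := by
  classical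
  set ι := {s // s ∈ um_distSet X} × X with hι
  -- an injection of the finite index type into ℕ
  let emb : ι ↪ ℕ := (Fintype.equivFin ι).toEmbedding.trans (Fin.valEmbedding)
  -- the orthonormal family of coordinate vectors
  let v : ι → lp (fun _ : ℕ => ℝ) 2 := fun j => lp.single 2 (emb j) 1
  have hv : Orthonormal ℝ v := by
    rw [orthonormal_iff_ite]
    intro i j
    have hvdef : ∀ k : ι, v k = lp.single 2 (emb k) 1 := fun k => rfl
    rw [hvdef i, hvdef j,
      lp.inner_single_left (𝕜 := ℝ) (G := fun _ : ℕ => ℝ) (emb i) (1 : ℝ) (lp.single 2 (emb j) 1)]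
    by_cases h : i = j
    · subst h
      rw [lp.single_apply_self]
      simp
    · rw [lp.single_apply_ne 2 (emb j) _ (fun hc => h (emb.injective hc))]
      simp [h]
  -- the embedding
  set g : X → ι → ℝ := fun x j => um_coef X (j.1 : ℝ) x j.2 with hg
  refine ⟨fun x => ∑ j : ι, g x j • v j, ?_⟩
  intro x y
  have hdiff : (∑ j : ι, g x j • v j) - (∑ j : ι, g y j • v j)
      = ∑ j : ι, (g x j - g y j) • v j := by
    rw [← Finset.sum_sub_distrib]
    exact Finset.sum_congr rfl (fun j _ => (sub_smul _ _ _).symm)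
  have hnorm : ‖(∑ j : ι, g x j • v j) - (∑ j : ι, g y j • v j)‖ ^ 2
      = ∑ j : ι, (g x j - g y j) ^ 2 := by
    rw [hdiff, ← real_inner_self_eq_norm_sq]
    rw [Orthonormal.inner_sum hv (fun j => g x j - g y j) (fun j => g x j - g y j) Finset.univ]
    exact Finset.sum_congr rfl (fun j _ => by simp [sq])
  have hsum : ∑ j : ι, (g x j - g y j) ^ 2 = dist x y ^ 2 := by
    rw [Fintype.sum_prod_type]
    have h1 : ∀ s : {s // s ∈ um_distSet X},
        ∑ z : X, (g x (s, z) - g y (s, z)) ^ 2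
          = if 0 < (s : ℝ) ∧ (s : ℝ) ≤ dist x y
            then (s : ℝ) ^ 2 - (um_pred X (s : ℝ)) ^ 2 else 0 := by
      intro s
      exact um_scale_sum X hultra (s : ℝ) x y
    rw [Finset.sum_congr rfl (fun s _ => h1 s)]
    rw [Finset.sum_coe_sort (um_distSet X)
      (fun s => if 0 < s ∧ s ≤ dist x y then s ^ 2 - (um_pred X s) ^ 2 else 0)]
    rw [← Finset.sum_filter]
    exact um_tele X ((um_distSet X).filter (fun s => 0 < s ∧ s ≤ dist x y)).card
      (dist x y) (um_dist_mem_distSet X x y) (le_refl _)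
  have hfinal : ‖(∑ j : ι, g x j • v j) - (∑ j : ι, g y j • v j)‖ ^ 2 = dist x y ^ 2 :=
    hnorm.trans hsum
  have := congrArg Real.sqrt hfinal
  rwa [Real.sqrt_sq (norm_nonneg _), Real.sqrt_sq dist_nonneg] at this
end

section
/- Every finite metric space (X,d) with n points admits an ultrametric ρ on X satisfying d(x,y) ≤ ρ(x,y) ≤ n·d(x,y) for all x,y ∈ X (i.e., X is n-equivalent to an ultrametric). -/
/-!
Let `ρ₀(x, y)` be the least `t` such that `x` and `y` are joined by a chain of points with
consecutive distances at most `t` (the subdominant ultrametric of `d`). Concatenating chains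
gives the strong triangle inequality, and the one-step chain gives `ρ₀ ≤ d`. Conversely a chain
can be taken without repetitions, hence with fewer than `n` steps, so `d ≤ n ρ₀` by the triangle
inequality. Thus `ρ = n ρ₀` works.
-/

open Finset

namespace SubdominantUltrametric

variable {X : Type*} [PseudoMetricSpace X]

def distLEGraph (X : Type*) [PseudoMetricSpace X] (t : ℝ) : SimpleGraph X where
  Adj a b := a ≠ b ∧ dist a b ≤ t
  symm := ⟨fun a b h => ⟨h.1.symm, dist_comm a b ▸ h.2⟩⟩
  loopless := ⟨fun _ h => h.1 rfl⟩

@[simp]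
lemma distLEGraph_adj {t : ℝ} {a b : X} : (distLEGraph X t).Adj a b ↔ a ≠ b ∧ dist a b ≤ t :=
  Iff.rfl

lemma distLEGraph_mono {s t : ℝ} (hst : s ≤ t) : distLEGraph X s ≤ distLEGraph X t :=
  fun _ _ h => distLEGraph_adj.2 ⟨h.1, h.2.trans hst⟩

lemma reachable_distLEGraph_dist (x y : X) : (distLEGraph X (dist x y)).Reachable x y := by
  by_cases hxy : x = y
  · exact hxy ▸ SimpleGraph.Reachable.refl x
  · exact SimpleGraph.Adj.reachable (distLEGraph_adj.2 ⟨hxy, le_rfl⟩)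

lemma dist_le_length_mul {t : ℝ} {x y : X} (p : (distLEGraph X t).Walk x y) :
    dist x y ≤ p.length * t := by
  induction p with
  | nil => simp
  | @cons u v w hadj _ ih =>
    rw [SimpleGraph.Walk.length_cons, Nat.cast_succ]
    linarith [dist_triangle u v w, (distLEGraph_adj.1 hadj).2]

lemma dist_le_card_mul_of_reachable [Fintype X] {t : ℝ} (ht : 0 ≤ t) {x y : X}
    (h : (distLEGraph X t).Reachable x y) : dist x y ≤ Fintype.card X * t :=
  h.elim_path fun p => (dist_le_length_mul p.1).trans <|
    mul_le_mul_of_nonneg_right (by exact_mod_cast p.2.length_lt.le) ht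

variable [Fintype X]

noncomputable def distValues (X : Type*) [PseudoMetricSpace X] [Fintype X] : Finset ℝ :=
  univ.image fun p : X × X => dist p.1 p.2

lemma dist_mem_distValues (x y : X) : dist x y ∈ distValues X :=
  mem_image_of_mem _ (mem_univ (x, y))

lemma nonneg_of_mem_distValues {t : ℝ} (ht : t ∈ distValues X) : 0 ≤ t := by
  obtain ⟨p, -, rfl⟩ := mem_image.1 ht
  exact dist_nonneg

open Classical in
/-- The threshold at which `x` and `y` become connected is always a distance value, so minimizing
over the finite set `distValues X` loses nothing and the minimum is attained. -/
noncomputable def subdominant (x y : X) : ℝ :=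
  ((distValues X).filter fun t => (distLEGraph X t).Reachable x y).min'
    ⟨dist x y, mem_filter.2 ⟨dist_mem_distValues x y, reachable_distLEGraph_dist x y⟩⟩

lemma subdominant_mem_distValues_and_reachable (x y : X) :
    subdominant x y ∈ distValues X ∧ (distLEGraph X (subdominant x y)).Reachable x y := by
  classical
  exact mem_filter.1 (min'_mem _ _)

lemma subdominant_le {x y : X} {t : ℝ} (ht : t ∈ distValues X)
    (h : (distLEGraph X t).Reachable x y) : subdominant x y ≤ t := by
  classical
  exact min'_le _ _ (mem_filter.2 ⟨ht, h⟩)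

lemma subdominant_nonneg (x y : X) : 0 ≤ subdominant x y :=
  nonneg_of_mem_distValues (subdominant_mem_distValues_and_reachable x y).1

lemma subdominant_le_dist (x y : X) : subdominant x y ≤ dist x y :=
  subdominant_le (dist_mem_distValues x y) (reachable_distLEGraph_dist x y)

lemma subdominant_self (x : X) : subdominant x x = 0 :=
  le_antisymm (dist_self x ▸ subdominant_le_dist x x) (subdominant_nonneg x x)

lemma subdominant_comm (x y : X) : subdominant x y = subdominant y x := by
  have key (a b : X) : subdominant a b ≤ subdominant b a :=
    have h := subdominant_mem_distValues_and_reachable b a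
    subdominant_le h.1 h.2.symm
  exact le_antisymm (key x y) (key y x)

lemma subdominant_le_max (x y z : X) :
    subdominant x z ≤ max (subdominant x y) (subdominant y z) := by
  obtain ⟨hxy_mem, hxy⟩ := subdominant_mem_distValues_and_reachable x y
  obtain ⟨hyz_mem, hyz⟩ := subdominant_mem_distValues_and_reachable y z
  refine subdominant_le ?_ ((hxy.mono ?_).trans (hyz.mono ?_))
  · rcases max_choice (subdominant x y) (subdominant y z) with h | h <;> rw [h] <;> assumption
  · exact distLEGraph_mono (le_max_left _ _)
  · exact distLEGraph_mono (le_max_right _ _)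

lemma dist_le_card_mul_subdominant (x y : X) : dist x y ≤ Fintype.card X * subdominant x y :=
  dist_le_card_mul_of_reachable (subdominant_nonneg x y)
    (subdominant_mem_distValues_and_reachable x y).2

end SubdominantUltrametric

open SubdominantUltrametric in
/-- Every `n`-point metric space is `n`-equivalent to an ultrametric: there is an
ultrametric `ρ` on `X` with `d(x,y) ≤ ρ(x,y) ≤ n·d(x,y)`. -/
theorem metric_n_equivalent_to_ultrametric
    (X : Type) [MetricSpace X] [Fintype X] :
    ∃ ρ : X → X → ℝ,
      (∀ x, ρ x x = 0) ∧
      (∀ x y, x ≠ y → 0 < ρ x y) ∧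
      (∀ x y, ρ x y = ρ y x) ∧
      (∀ x y z, ρ x z ≤ max (ρ x y) (ρ y z)) ∧
      (∀ x y : X, dist x y ≤ ρ x y ∧ ρ x y ≤ (Fintype.card X : ℝ) * dist x y) := by
  have hn : (0 : ℝ) ≤ Fintype.card X := Nat.cast_nonneg _
  refine ⟨fun x y => Fintype.card X * subdominant x y, fun x => ?_, fun x y hxy => ?_,
    fun x y => ?_, fun x y z => ?_, fun x y => ⟨?_, ?_⟩⟩
  · simp [subdominant_self]
  · exact (dist_pos.2 hxy).trans_le (dist_le_card_mul_subdominant x y)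
  · exact congrArg (_ * ·) (subdominant_comm x y)
  · exact (mul_le_mul_of_nonneg_left (subdominant_le_max x y z) hn).trans_eq
      (mul_max_of_nonneg _ _ hn)
  · exact dist_le_card_mul_subdominant x y
  · exact mul_le_mul_of_nonneg_left (subdominant_le_dist x y) hn
end

section
/- There exists a universal constant C > 0 such that for every real α > 2, every real Φ ≥ 1, every finite metric space (X,d) with at least two points and aspect ratio Φ(X) ≤ Φ, and every weight function w : X → (0,∞), setting ψ = max(0, 1 − C·(log α + log log(4Φ))/α), there exists a subset Y ⊆ X and an ultrametric ρ on Y with d(x,y) ≤ ρ(x,y) ≤ α·d(x,y) for all x,y ∈ Y, such that Σ_{y∈Y} w(y)^ψ ≥ (Σ_{x∈X} w(x))^ψ. -/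
/-!
Weighted Ramsey partitions in the style of Mendel and Naor. Fix `D ≥ diam X` and scales
`δ_k = D / 2 ^ k`. At every scale draw, independently, an ordering of `X` (without replacement,
each time proportionally to `w`) and an index `i < N` uniformly, and send every point to the first
point of the ordering within `r = δ_k / 8 + (2 i + 1) t`, where `t = δ_k / α`. The whole `t`-ball
around `x` lands in one cluster as soon as the first point of the ordering in `B(x, r + t)` lies in
`B(x, r - t)`, an event of probability `w(B(x, r - t)) / w(B(x, r + t))`. By AM–GM over `i` these
ratios telescope, and for `16 N ≤ α` so do the resulting bounds over the scales: `x` is padded at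
every scale with probability at least `(w x / w X) ^ (1 / N)`. Hence the padded set `Y` satisfies
`E ∑_{y ∈ Y} w y ^ (1 - 1/N) ≥ ∑_x w x ^ (1 - 1/N) (w x / w X) ^ (1/N) = w X ^ (1 - 1/N)`.
On `Y`, `ρ(x, y) = δ_k` for the first scale `k` separating `x` and `y` is an ultrametric with
`d ≤ ρ ≤ α d`.
-/

open Finset

namespace WeightedRamsey

theorem rpow_div_le_average_div (f : ℕ → ℝ) (hf : ∀ j, 0 < f j) {N : ℕ} (hN : 0 < N) :
    (f 0 / f N) ^ (N⁻¹ : ℝ) ≤ (∑ i ∈ range N, f i / f (i + 1)) / N := by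
  have htel : ∀ n, ∏ i ∈ range n, f i / f (i + 1) = f 0 / f n := by
    intro n
    induction n with
    | zero => simp [(hf 0).ne']
    | succ n ih =>
      rw [prod_range_succ, ih]
      field_simp [(hf n).ne']
  have := Real.geom_mean_le_arith_mean (range N) (fun _ => 1) (fun i => f i / f (i + 1))
    (fun _ _ => zero_le_one) (by simpa using hN) fun i _ => (div_pos (hf i) (hf _)).le
  simpa [htel] using this

theorem div_le_prod_range_div {A B : ℕ → ℝ} (hA : ∀ k, 0 < A k) (hAB : ∀ k, A k ≤ B k)
    (hBA : ∀ k, B (k + 1) ≤ A k) (K : ℕ) : A K / B 0 ≤ ∏ k ∈ range (K + 1), A k / B k := by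
  induction K with
  | zero => simp
  | succ K ih =>
    have hB : ∀ k, 0 < B k := fun k => (hA k).trans_le (hAB k)
    rw [prod_range_succ]
    calc A (K + 1) / B 0 = A K / B 0 * (A (K + 1) / A K) := by field_simp [(hA K).ne']
      _ ≤ A K / B 0 * (A (K + 1) / B (K + 1)) :=
        mul_le_mul_of_nonneg_left (div_le_div_of_nonneg_left (hA _).le (hB _) (hBA K))
          (div_pos (hA _) (hB _)).le
      _ ≤ _ := by gcongr; exact (div_pos (hA _) (hB _)).le

theorem sum_rpow_mul_div_rpow {ι : Type*} (s : Finset ι) {w : ι → ℝ} (hw : ∀ i ∈ s, 0 < w i)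
    (hs : s.Nonempty) (θ : ℝ) :
    ∑ i ∈ s, w i ^ (1 - θ) * (w i / ∑ j ∈ s, w j) ^ θ = (∑ i ∈ s, w i) ^ (1 - θ) := by
  have hW : 0 < ∑ j ∈ s, w j := sum_pos hw hs
  have : ∀ i ∈ s, w i ^ (1 - θ) * (w i / ∑ j ∈ s, w j) ^ θ = w i / (∑ j ∈ s, w j) ^ θ := by
    intro i hi
    rw [Real.div_rpow (hw i hi).le hW.le, mul_div_assoc', ← Real.rpow_add (hw i hi)]
    simp
  rw [sum_congr rfl this, ← sum_div, Real.rpow_sub hW, Real.rpow_one]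

theorem rpow_le_sum_rpow_of_exponent_le {ι : Type*} {s : Finset ι} {w : ι → ℝ} {W ψ E : ℝ}
    (hW : 0 < W) (hw : ∀ i ∈ s, 0 < w i) (hwW : ∀ i ∈ s, w i ≤ W) (hE : E ≤ ψ)
    (h : W ^ ψ ≤ ∑ i ∈ s, w i ^ ψ) : W ^ E ≤ ∑ i ∈ s, w i ^ E := by
  have key : ∀ e : ℝ, ∑ i ∈ s, w i ^ e = W ^ e * ∑ i ∈ s, (w i / W) ^ e := by
    intro e
    rw [mul_sum]
    refine sum_congr rfl fun i hi => ?_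
    rw [Real.div_rpow (hw i hi).le hW.le, mul_div_cancel₀ _ (Real.rpow_pos_of_pos hW e).ne']
  rw [key] at h ⊢
  have h1 : 1 ≤ ∑ i ∈ s, (w i / W) ^ ψ := by
    simpa using le_of_mul_le_mul_left (by simpa using h) (Real.rpow_pos_of_pos hW ψ)
  refine le_mul_of_one_le_right (Real.rpow_nonneg hW.le E) (h1.trans (sum_le_sum fun i hi => ?_))
  exact Real.rpow_le_rpow_of_exponent_ge (div_pos (hw i hi) hW) ((div_le_one hW).2 (hwW i hi)) hE

theorem exists_le_of_le_sum_mul {α : Type*} {Ω : Finset α} {μ F : α → ℝ}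
    (hμ : ∀ p ∈ Ω, 0 ≤ μ p) (hμ1 : ∑ p ∈ Ω, μ p = 1) {c : ℝ}
    (h : c ≤ ∑ p ∈ Ω, μ p * F p) : ∃ p ∈ Ω, c ≤ F p := by
  by_contra! hlt
  obtain ⟨p, hp, hμp⟩ := exists_ne_zero_of_sum_ne_zero (hμ1.trans_ne one_ne_zero)
  have : ∑ p ∈ Ω, μ p * F p < ∑ p ∈ Ω, μ p * c :=
    sum_lt_sum (fun q hq => mul_le_mul_of_nonneg_left (hlt q hq).le (hμ q hq))
      ⟨p, hp, mul_lt_mul_of_pos_left (hlt p hp) ((hμ p hp).lt_of_ne' hμp)⟩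
  rw [← sum_mul, hμ1, one_mul] at this
  linarith

theorem antitone_div_two_pow {D : ℝ} (hD : 0 ≤ D) : Antitone fun k : ℕ => D / 2 ^ k :=
  fun _ _ hkl => div_le_div_of_nonneg_left hD (by positivity) (pow_le_pow_right₀ one_le_two hkl)

theorem add_two_mul_mul_div_le {N : ℕ} {α δ : ℝ} (hN : 0 < N) (hα : 16 * N ≤ α) (hδ : 0 ≤ δ) :
    δ / 8 + 2 * N * (δ / α) ≤ δ / 4 := by
  have hα0 : 0 < α := lt_of_lt_of_le (by positivity) hα
  have : 2 * N * (δ / α) ≤ δ / 8 := by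
    rw [mul_div_assoc', div_le_div_iff₀ hα0 (by norm_num)]
    nlinarith
  linarith

theorem exists_pos_forall_dist_le (X : Type*) [PseudoMetricSpace X] [Finite X] :
    ∃ D > 0, ∀ x y : X, dist x y ≤ D := by
  obtain ⟨C, hC⟩ := Metric.isBounded_iff.1 (Set.toFinite (Set.univ : Set X)).isBounded
  exact ⟨max C 1, by positivity, fun x y => (hC trivial trivial).trans (le_max_left _ _)⟩

theorem exists_pos_forall_le_dist (X : Type*) [MetricSpace X] [Fintype X] [DecidableEq X] :
    ∃ ε > 0, ∀ x y : X, x ≠ y → ε ≤ dist x y := by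
  rcases (univ.offDiag : Finset (X × X)).eq_empty_or_nonempty with h | h
  · refine ⟨1, one_pos, fun x y hxy => absurd (h ▸ ?_) (notMem_empty (x, y))⟩
    exact mem_offDiag.2 ⟨mem_univ x, mem_univ y, hxy⟩
  obtain ⟨e, he, hmin⟩ := exists_min_image _ (fun e : X × X => dist e.1 e.2) h
  exact ⟨dist e.1 e.2, dist_pos.2 (mem_offDiag.1 he).2.2,
    fun x y hxy => hmin (x, y) (mem_offDiag.2 ⟨mem_univ x, mem_univ y, hxy⟩)⟩

section Arrangements

variable {X : Type*} [DecidableEq X]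

def arrangements : ℕ → Finset X → Finset (List X)
  | 0, _ => {[]}
  | n + 1, S => S.biUnion fun a => (arrangements n (S.erase a)).image (a :: ·)

variable (w : X → ℝ)

/-- The probability that drawing without replacement from `S`, each time with probability
proportional to `w`, starts with the elements of `l` in this order. -/
noncomputable def drawProb : Finset X → List X → ℝ
  | _, [] => 1
  | S, a :: l => w a / (∑ x ∈ S, w x) * drawProb (S.erase a) l

theorem sum_arrangements_succ {M : Type*} [AddCommMonoid M] (f : List X → M) (n : ℕ)
    (S : Finset X) :
    ∑ l ∈ arrangements (n + 1) S, f l = ∑ a ∈ S, ∑ l ∈ arrangements n (S.erase a), f (a :: l) := by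
  rw [arrangements, sum_biUnion]
  · exact sum_congr rfl fun a _ => sum_image fun _ _ _ _ h => List.cons_injective h
  · intro a _ b _ hab
    simp only [Function.onFun, disjoint_left, mem_image]
    rintro _ ⟨u, -, rfl⟩ ⟨v, -, h⟩
    exact hab (List.cons_eq_cons.1 h).1.symm

theorem sum_drawProb_mul_succ (f : List X → ℝ) (n : ℕ) (S : Finset X) :
    ∑ l ∈ arrangements (n + 1) S, drawProb w S l * f l =
      ∑ a ∈ S, w a / (∑ x ∈ S, w x) *
        ∑ l ∈ arrangements n (S.erase a), drawProb w (S.erase a) l * f (a :: l) := by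
  simp only [sum_arrangements_succ, drawProb, mul_sum, mul_assoc]

theorem drawProb_nonneg (hw : ∀ x, 0 ≤ w x) (S : Finset X) (l : List X) :
    0 ≤ drawProb w S l := by
  induction l generalizing S with
  | nil => exact zero_le_one
  | cons a l ih => exact mul_nonneg (div_nonneg (hw a) (sum_nonneg fun x _ => hw x)) (ih _)

theorem sum_drawProb {n : ℕ} {S : Finset X} (h : S.card = n) (hw : ∀ x ∈ S, 0 < w x) :
    ∑ l ∈ arrangements n S, drawProb w S l = 1 := by
  induction n generalizing S with
  | zero => simp [arrangements, drawProb]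
  | succ n ih =>
    have hS : 0 < ∑ x ∈ S, w x := sum_pos hw (card_pos.1 (by omega))
    have := sum_drawProb_mul_succ w (fun _ => 1) n S
    simp only [mul_one] at this
    rw [this, sum_congr rfl fun a ha => by
      rw [ih (by rw [card_erase_of_mem ha, h]; rfl) (fun x hx => hw x (mem_of_mem_erase hx)),
        mul_one], ← sum_div, div_self hS.ne']

theorem sum_mul_ite_mem_ite_mem {S U T : Finset X} (hTU : T ⊆ U) (hUS : U ⊆ S) (r : ℝ) :
    ∑ a ∈ S, w a * (if a ∈ U then (if a ∈ T then 1 else 0) else r) =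
      ∑ x ∈ T, w x + (∑ x ∈ S, w x - ∑ x ∈ U, w x) * r := by
  have hU : S.filter (· ∈ U) = U := by rw [filter_mem_eq_inter, inter_eq_right.2 hUS]
  have hSU := sum_filter_add_sum_filter_not S (· ∈ U) w
  rw [hU] at hSU
  simp only [mul_ite, mul_one, mul_zero]
  rw [sum_ite, hU, sum_ite_mem, inter_eq_right.2 hTU, ← sum_mul, ← hSU]
  ring

theorem sum_drawProb_find?_mem {n : ℕ} {S U T : Finset X} (h : S.card = n)
    (hw : ∀ x ∈ S, 0 < w x) (hTU : T ⊆ U) (hUS : U ⊆ S) (hU : U.Nonempty) :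
    ∑ l ∈ arrangements n S, drawProb w S l * (if ∃ c ∈ l.find? (· ∈ U), c ∈ T then 1 else 0) =
      (∑ x ∈ T, w x) / ∑ x ∈ U, w x := by
  induction n generalizing S with
  | zero => simp [card_eq_zero.1 h] at hUS; simp [hUS] at hU
  | succ n ih =>
    have hS : 0 < ∑ x ∈ S, w x := sum_pos hw (card_pos.1 (by omega))
    have hUpos : 0 < ∑ x ∈ U, w x := sum_pos (fun x hx => hw x (hUS hx)) hU
    have first : ∀ a ∈ S, ∑ l ∈ arrangements n (S.erase a), drawProb w (S.erase a) l *
          (if ∃ c ∈ (a :: l).find? (· ∈ U), c ∈ T then 1 else 0) =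
        if a ∈ U then (if a ∈ T then 1 else 0) else (∑ x ∈ T, w x) / ∑ x ∈ U, w x := by
      intro a ha
      have hcard : (S.erase a).card = n := by rw [card_erase_of_mem ha, h]; rfl
      have hwa : ∀ x ∈ S.erase a, 0 < w x := fun x hx => hw x (mem_of_mem_erase hx)
      by_cases haU : a ∈ U
      · simp only [List.find?_cons_of_pos (p := (· ∈ U)) (decide_eq_true haU), Option.mem_def,
          Option.some.injEq, exists_eq_left', if_pos haU, ← sum_mul]
        rw [sum_drawProb w hcard hwa, one_mul]
      · simp only [List.find?_cons_of_neg (p := (· ∈ U)) (by simpa using haU), if_neg haU]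
        exact ih hcard hwa fun x hx => mem_erase.2 ⟨fun hxa => haU (hxa ▸ hx), hUS hx⟩
    rw [sum_drawProb_mul_succ, sum_congr rfl fun a ha => by rw [first a ha, div_mul_eq_mul_div],
      ← sum_div, sum_mul_ite_mem_ite_mem w hTU hUS]
    field_simp
    ring

variable [Fintype X]

noncomputable def scaleSamples (N : ℕ) : Finset (List X × ℕ) :=
  arrangements (Fintype.card X) univ ×ˢ range N

noncomputable def scaleWeight (N : ℕ) (a : List X × ℕ) : ℝ := drawProb w univ a.1 / N

noncomputable def samples (K N : ℕ) : Finset (Fin (K + 1) → List X × ℕ) :=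
  Fintype.piFinset fun _ => scaleSamples N

noncomputable def sampleWeight {K : ℕ} (N : ℕ) (p : Fin (K + 1) → List X × ℕ) : ℝ :=
  ∏ k, scaleWeight w N (p k)

variable {w}

theorem scaleWeight_nonneg (hw : ∀ x, 0 < w x) (N : ℕ) (a : List X × ℕ) :
    0 ≤ scaleWeight w N a :=
  div_nonneg (drawProb_nonneg w (fun x => (hw x).le) _ _) N.cast_nonneg

theorem sum_scaleWeight (hw : ∀ x, 0 < w x) {N : ℕ} (hN : 0 < N) :
    ∑ a ∈ scaleSamples N, scaleWeight w N a = 1 := by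
  rw [scaleSamples, sum_product]
  simp only [scaleWeight, sum_const, card_range, nsmul_eq_mul]
  rw [sum_congr rfl fun l _ => mul_div_cancel₀ _ (by positivity : (N : ℝ) ≠ 0)]
  exact sum_drawProb w card_univ fun x _ => hw x

theorem sum_sampleWeight (hw : ∀ x, 0 < w x) {K N : ℕ} (hN : 0 < N) :
    ∑ p ∈ samples K N, sampleWeight w N p = 1 := by
  simp only [samples, sampleWeight, ← prod_univ_sum, sum_scaleWeight hw hN, prod_const_one]

end Arrangements

section Clusters

variable {X : Type*} [PseudoMetricSpace X]

noncomputable def clusterCenter (l : List X) (r : ℝ) (x : X) : X :=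
  (l.find? fun c => dist c x ≤ r).getD x

theorem dist_clusterCenter_le {r : ℝ} (hr : 0 ≤ r) (l : List X) (x : X) :
    dist (clusterCenter l r x) x ≤ r := by
  unfold clusterCenter
  cases h : l.find? fun c => dist c x ≤ r with
  | none => simpa using hr
  | some c => simpa using List.find?_some h

theorem dist_le_of_clusterCenter_eq {r : ℝ} (hr : 0 ≤ r) {l : List X} {x y : X}
    (h : clusterCenter l r x = clusterCenter l r y) : dist x y ≤ 2 * r := by
  calc dist x y ≤ dist (clusterCenter l r x) x + dist (clusterCenter l r x) y :=
        dist_triangle_left x y _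
    _ ≤ r + r := add_le_add (dist_clusterCenter_le hr l x)
        (by rw [h]; exact dist_clusterCenter_le hr l y)
    _ = 2 * r := by ring

noncomputable def sampleCenter (q t : ℝ) (a : List X × ℕ) : X → X :=
  clusterCenter a.1 (q + (2 * a.2 + 1) * t)

theorem dist_le_of_sampleCenter_eq {q t : ℝ} (hq : 0 ≤ q) (ht : 0 ≤ t) {N : ℕ}
    {a : List X × ℕ} (ha : a.2 < N) {x y : X} (h : sampleCenter q t a x = sampleCenter q t a y) :
    dist x y ≤ 2 * (q + 2 * N * t) := by
  have hi : (a.2 : ℝ) + 1 ≤ N := by exact_mod_cast ha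
  refine (dist_le_of_clusterCenter_eq (by positivity) h).trans ?_
  nlinarith

variable [Fintype X]

noncomputable def closedBallFinset (x : X) (r : ℝ) : Finset X := univ.filter (dist · x ≤ r)

theorem mem_closedBallFinset {x z : X} {r : ℝ} : z ∈ closedBallFinset x r ↔ dist z x ≤ r := by
  simp [closedBallFinset]

noncomputable def ballWeight (w : X → ℝ) (x : X) (r : ℝ) : ℝ := ∑ z ∈ closedBallFinset x r, w z

variable {w : X → ℝ}

theorem ballWeight_pos (hw : ∀ x, 0 < w x) (x : X) {r : ℝ} (hr : 0 ≤ r) :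
    0 < ballWeight w x r :=
  sum_pos (fun z _ => hw z) ⟨x, mem_closedBallFinset.2 (by simpa using hr)⟩

theorem ballWeight_mono (hw : ∀ x, 0 < w x) (x : X) {r s : ℝ} (h : r ≤ s) :
    ballWeight w x r ≤ ballWeight w x s :=
  sum_le_sum_of_subset_of_nonneg
    (fun _ hz => mem_closedBallFinset.2 ((mem_closedBallFinset.1 hz).trans h))
    fun z _ _ => (hw z).le

theorem ballWeight_eq_self {ε r : ℝ} (hsep : ∀ x y : X, x ≠ y → ε ≤ dist x y)
    (hr : 0 ≤ r) (hrε : r < ε) (x : X) : ballWeight w x r = w x := by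
  have : closedBallFinset x r = {x} := by
    ext z
    simp only [mem_closedBallFinset, mem_singleton]
    refine ⟨fun hz => by_contra fun hzx => ?_, fun hz => by simpa [hz] using hr⟩
    linarith [hsep z x hzx]
  rw [ballWeight, this, sum_singleton]

variable [DecidableEq X]

theorem clusterCenter_eq_of_find?_mem {l : List X} {x z : X} {r R R' t : ℝ}
    (hR' : R' + t ≤ r) (hR : r + t ≤ R)
    (hl : ∃ c ∈ l.find? (· ∈ closedBallFinset x R), c ∈ closedBallFinset x R')
    (hz : dist x z ≤ t) : clusterCenter l r z = clusterCenter l r x := by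
  have ht : 0 ≤ t := dist_nonneg.trans hz
  induction l with
  | nil => simp at hl
  | cons a l ih =>
    by_cases ha : dist a x ≤ R
    · obtain ⟨c, hc, hcR'⟩ := hl
      rw [List.find?_cons_of_pos (by simpa [mem_closedBallFinset] using ha)] at hc
      obtain rfl := Option.some_injective _ hc
      have hax : dist a x ≤ R' := mem_closedBallFinset.1 hcR'
      have haz : dist a z ≤ r := by linarith [dist_triangle a x z]
      simp [clusterCenter, haz, show dist a x ≤ r by linarith]
    · rw [List.find?_cons_of_neg (by simpa [mem_closedBallFinset] using ha)] at hl
      have hax : ¬ dist a x ≤ r := by linarith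
      have haz : ¬ dist a z ≤ r := by linarith [dist_triangle a z x, dist_comm x z]
      simpa [clusterCenter, List.find?_cons_of_neg, hax, haz] using ih hl

/-- The sample `(l, i)` clusters at radius `r = q + (2 i + 1) t` (see `sampleCenter`); the two
balls below have radii `r + t` and `r - t`. -/
abbrev IsPadding (q t : ℝ) (x : X) (a : List X × ℕ) : Prop :=
  ∃ c ∈ a.1.find? (· ∈ closedBallFinset x (q + 2 * (a.2 + 1) * t)),
    c ∈ closedBallFinset x (q + 2 * a.2 * t)

theorem sampleCenter_eq_of_isPadding {q t : ℝ} {a : List X × ℕ} {x z : X}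
    (h : IsPadding q t x a) (hz : dist x z ≤ t) : sampleCenter q t a z = sampleCenter q t a x :=
  clusterCenter_eq_of_find?_mem (le_of_eq (by ring)) (le_of_eq (by ring)) h hz

theorem rpow_ballWeight_div_le_sum_scaleWeight (hw : ∀ x, 0 < w x) {N : ℕ} (hN : 0 < N)
    {q t : ℝ} (hq : 0 ≤ q) (ht : 0 ≤ t) (x : X) :
    (ballWeight w x q / ballWeight w x (q + 2 * N * t)) ^ (N⁻¹ : ℝ) ≤
      ∑ a ∈ (scaleSamples N).filter (IsPadding q t x), scaleWeight w N a := by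
  set f : ℕ → ℝ := fun j => ballWeight w x (q + 2 * j * t)
  have hf : ∀ j, 0 < f j := fun j => ballWeight_pos hw x (by positivity)
  have hradius : ∀ i : ℕ, ∑ l ∈ arrangements (Fintype.card X) univ,
      (if IsPadding q t x (l, i) then scaleWeight w N (l, i) else 0) = f i / f (i + 1) / N := by
    intro i
    have hsub : closedBallFinset x (q + 2 * i * t) ⊆ closedBallFinset x (q + 2 * (i + 1) * t) :=
      fun z hz => mem_closedBallFinset.2 ((mem_closedBallFinset.1 hz).trans (by nlinarith))
    calc _ = (∑ l ∈ arrangements (Fintype.card X) univ,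
          drawProb w univ l * if IsPadding q t x (l, i) then 1 else 0) / N := by
          rw [sum_div]
          exact sum_congr rfl fun l _ => by split_ifs <;> simp [scaleWeight]
      _ = _ := by
        rw [sum_drawProb_find?_mem w card_univ (fun x _ => hw x) hsub (subset_univ _)
          ⟨x, mem_closedBallFinset.2 (by simp; positivity)⟩]
        simp [f, ballWeight]
  rw [sum_filter, scaleSamples, sum_product_right, sum_congr rfl fun i _ => hradius i, ← sum_div]
  simpa [f] using rpow_div_le_average_div f hf hN

end Clusters

section LevelUltrametric

variable {X β : Type*} (c : ℕ → X → β) (δ : ℕ → ℝ)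

open Classical in
noncomputable def levelUltrametric (x y : X) : ℝ :=
  if h : ∃ k, c k x ≠ c k y then δ (Nat.find h) else 0

variable {c δ}

theorem levelUltrametric_self (x : X) : levelUltrametric c δ x x = 0 := by
  simp [levelUltrametric]

theorem levelUltrametric_comm (x y : X) :
    levelUltrametric c δ x y = levelUltrametric c δ y x := by
  classical
  unfold levelUltrametric
  by_cases h : ∃ k, c k x ≠ c k y
  · rw [dif_pos h, dif_pos (h.imp fun _ => Ne.symm), Nat.find_congr' ne_comm]
  · rw [dif_neg h, dif_neg fun h' => h (h'.imp fun _ => Ne.symm)]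

theorem levelUltrametric_nonneg (hδ : ∀ k, 0 ≤ δ k) (x y : X) :
    0 ≤ levelUltrametric c δ x y := by
  unfold levelUltrametric
  split_ifs
  exacts [hδ _, le_rfl]

theorem le_levelUltrametric_of_ne (hδ : Antitone δ) {x y : X} {n : ℕ} (h : c n x ≠ c n y) :
    δ n ≤ levelUltrametric c δ x y := by
  classical
  rw [levelUltrametric, dif_pos ⟨n, h⟩]
  exact hδ (Nat.find_min' _ h)

theorem isUltrametricOn_levelUltrametric {X : Type} {c : ℕ → X → β} (hδ : ∀ k, 0 < δ k)
    (hδ' : Antitone δ) (hc : ∀ x y, x ≠ y → ∃ k, c k x ≠ c k y) (Y : Set X) :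
    IsUltrametricOn Y (levelUltrametric c δ) := by
  classical
  refine ⟨fun x _ => levelUltrametric_self x, fun x _ y _ hxy => ?_,
    fun x _ y _ => levelUltrametric_comm x y, fun x _ y _ z _ => ?_⟩
  · rw [levelUltrametric, dif_pos (hc x y hxy)]
    exact hδ _
  · by_cases hxz : ∃ k, c k x ≠ c k z
    · have hn := Nat.find_spec hxz
      rw [levelUltrametric, dif_pos hxz]
      by_cases hxy : c (Nat.find hxz) x = c (Nat.find hxz) y
      · exact (le_levelUltrametric_of_ne hδ' (hxy ▸ hn)).trans (le_max_right _ _)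
      · exact (le_levelUltrametric_of_ne hδ' hxy).trans (le_max_left _ _)
    · rw [levelUltrametric, dif_neg hxz]
      exact (levelUltrametric_nonneg (fun k => (hδ k).le) x y).trans (le_max_left _ _)

variable [PseudoMetricSpace X]

theorem dist_le_levelUltrametric {x y : X} (hxy : ∃ k, c k x ≠ c k y) (h₀ : dist x y ≤ δ 0)
    (h : ∀ k, c k x = c k y → dist x y ≤ δ (k + 1)) : dist x y ≤ levelUltrametric c δ x y := by
  classical
  rw [levelUltrametric, dif_pos hxy]
  cases hn : Nat.find hxy with
  | zero => exact h₀
  | succ k => exact h k (not_not.1 (Nat.find_min hxy (hn ▸ k.lt_succ_self)))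

theorem levelUltrametric_le_mul_dist {x y : X} (hxy : ∃ k, c k x ≠ c k y) {α : ℝ}
    (h : ∀ k, α * dist x y < δ k → c k x = c k y) :
    levelUltrametric c δ x y ≤ α * dist x y := by
  classical
  rw [levelUltrametric, dif_pos hxy]
  exact not_lt.1 fun hlt => Nat.find_spec hxy (h _ hlt)

end LevelUltrametric

section Sampling

variable {X : Type*} [PseudoMetricSpace X] [Fintype X] [DecidableEq X] {w : X → ℝ} {K N : ℕ}

noncomputable def paddedSet (q t : ℕ → ℝ) (p : Fin (K + 1) → List X × ℕ) : Finset X :=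
  univ.filter fun x => ∀ k : Fin (K + 1), IsPadding (q k) (t k) x (p k)

variable {q t : ℕ → ℝ}

theorem rpow_div_le_sum_sampleWeight_padded (hw : ∀ x, 0 < w x) (hN : 0 < N)
    (hq : ∀ k, 0 ≤ q k) (ht : ∀ k, 0 ≤ t k) (hnest : ∀ k, q (k + 1) + 2 * N * t (k + 1) ≤ q k)
    (x : X) :
    (ballWeight w x (q K) / ∑ z, w z) ^ (N⁻¹ : ℝ) ≤
      ∑ p ∈ (samples K N).filter (x ∈ paddedSet q t ·), sampleWeight w N p := by
  set A : ℕ → ℝ := fun k => ballWeight w x (q k)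
  set B : ℕ → ℝ := fun k => ballWeight w x (q k + 2 * N * t k)
  have hA : ∀ k, 0 < A k := fun k => ballWeight_pos hw x (hq k)
  have hAB : ∀ k, A k ≤ B k :=
    fun k => ballWeight_mono hw x (le_add_of_nonneg_right (by have := ht k; positivity))
  have hBA : ∀ k, B (k + 1) ≤ A k := fun k => ballWeight_mono hw x (hnest k)
  have hB : ∀ k, 0 < B k := fun k => (hA k).trans_le (hAB k)
  have hBW : B 0 ≤ ∑ z, w z :=
    sum_le_sum_of_subset_of_nonneg (subset_univ _) fun z _ _ => (hw z).le
  have hindep : (samples K N).filter (x ∈ paddedSet q t ·) =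
      Fintype.piFinset fun k : Fin (K + 1) =>
        (scaleSamples N).filter (IsPadding (q k) (t k) x) := by
    ext p
    simp [samples, paddedSet, Fintype.mem_piFinset, forall_and]
  simp only [hindep, sampleWeight, ← prod_univ_sum]
  calc (A K / ∑ z, w z) ^ (N⁻¹ : ℝ) ≤ (A K / B 0) ^ (N⁻¹ : ℝ) :=
        Real.rpow_le_rpow (div_nonneg (hA K).le ((hB 0).le.trans hBW))
          (div_le_div_of_nonneg_left (hA K).le (hB 0) hBW) (by positivity)
    _ ≤ (∏ k ∈ range (K + 1), A k / B k) ^ (N⁻¹ : ℝ) := by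
        gcongr
        · exact (div_pos (hA K) (hB 0)).le
        · exact div_le_prod_range_div hA hAB hBA K
    _ = ∏ k : Fin (K + 1), (A k / B k) ^ (N⁻¹ : ℝ) := by
        rw [← Real.finsetProd_rpow _ _ fun k _ => (div_pos (hA k) (hB k)).le,
          Fin.prod_univ_eq_prod_range (fun k => (A k / B k) ^ (N⁻¹ : ℝ))]
    _ ≤ _ := prod_le_prod (fun k _ => by have := div_pos (hA k) (hB k); positivity)
        fun k _ => rpow_ballWeight_div_le_sum_scaleWeight hw hN (hq k) (ht k) x

theorem exists_mem_samples_rpow_le_sum_paddedSet [Nonempty X] (hw : ∀ x, 0 < w x) (hN : 0 < N)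
    (hq : ∀ k, 0 ≤ q k) (ht : ∀ k, 0 ≤ t k) (hnest : ∀ k, q (k + 1) + 2 * N * t (k + 1) ≤ q k)
    (hK : ∀ x, ballWeight w x (q K) = w x) :
    ∃ p ∈ samples K N,
      (∑ x, w x) ^ (1 - (N : ℝ)⁻¹) ≤ ∑ x ∈ paddedSet q t p, w x ^ (1 - (N : ℝ)⁻¹) := by
  refine exists_le_of_le_sum_mul (fun p _ => prod_nonneg fun k _ => scaleWeight_nonneg hw N _)
    (sum_sampleWeight hw hN) ?_
  calc (∑ x, w x) ^ (1 - (N : ℝ)⁻¹)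
      = ∑ x, w x ^ (1 - (N : ℝ)⁻¹) * (w x / ∑ z, w z) ^ (N⁻¹ : ℝ) :=
        (sum_rpow_mul_div_rpow univ (fun x _ => hw x) univ_nonempty _).symm
    _ ≤ ∑ x, w x ^ (1 - (N : ℝ)⁻¹) *
          ∑ p ∈ (samples K N).filter (x ∈ paddedSet q t ·), sampleWeight w N p := by
        refine sum_le_sum fun x _ => mul_le_mul_of_nonneg_left ?_ (Real.rpow_nonneg (hw x).le _)
        simpa only [hK] using rpow_div_le_sum_sampleWeight_padded (K := K) hw hN hq ht hnest x
    _ = ∑ p ∈ samples K N,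
          sampleWeight w N p * ∑ x ∈ paddedSet q t p, w x ^ (1 - (N : ℝ)⁻¹) := by
        simp only [mul_sum, sum_filter]
        rw [sum_comm]
        refine sum_congr rfl fun p _ => ?_
        simp only [mul_ite, mul_zero]
        rw [← sum_filter, filter_mem_eq_inter, univ_inter]
        exact sum_congr rfl fun _ _ => mul_comm _ _

end Sampling

section Construction

variable {X : Type} [PseudoMetricSpace X] [Fintype X] [DecidableEq X] {D α : ℝ} {K N : ℕ}
  {p : Fin (K + 1) → List X × ℕ}

/-- Scales beyond `K` reuse the sample of scale `K`. -/
noncomputable def dyadicCenters (D α : ℝ) (p : Fin (K + 1) → List X × ℕ) (k : ℕ) : X → X :=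
  sampleCenter (D / 2 ^ (Fin.clamp k K : ℕ) / 8) (D / 2 ^ (Fin.clamp k K : ℕ) / α)
    (p (Fin.clamp k K))

theorem dist_le_of_dyadicCenters_eq (hD : 0 ≤ D) (hN : 0 < N) (hα : 16 * N ≤ α)
    (hp : p ∈ samples K N) {k : ℕ} {x y : X}
    (h : dyadicCenters D α p k x = dyadicCenters D α p k y) :
    dist x y ≤ D / 2 ^ (Fin.clamp k K : ℕ) / 2 := by
  have hα0 : 0 < α := lt_of_lt_of_le (by positivity) hα
  have hi := mem_range.1 (mem_product.1 (Fintype.mem_piFinset.1 hp (Fin.clamp k K))).2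
  have := add_two_mul_mul_div_le hN hα (by positivity : 0 ≤ D / 2 ^ (Fin.clamp k K : ℕ))
  have := dist_le_of_sampleCenter_eq (by positivity) (by positivity) hi h
  linarith

theorem eq_of_dyadicCenters_eq {ε : ℝ} (hD : 0 ≤ D) (hN : 0 < N) (hα : 16 * N ≤ α)
    (hp : p ∈ samples K N) (hsep : ∀ x y : X, x ≠ y → ε ≤ dist x y) (hK : D / 2 ^ K < ε)
    {k : ℕ} (hk : K ≤ k) {x y : X} (h : dyadicCenters D α p k x = dyadicCenters D α p k y) :
    x = y := by
  by_contra hxy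
  have := dist_le_of_dyadicCenters_eq hD hN hα hp h
  rw [show (Fin.clamp k K : ℕ) = K from min_eq_right hk] at this
  linarith [hsep x y hxy, div_le_self (by positivity : 0 ≤ D / 2 ^ K) one_le_two]

theorem dyadicCenters_eq_of_mem_paddedSet (hD : 0 ≤ D) (hα : 0 < α) {x y : X}
    (hx : x ∈ paddedSet (fun k => D / 2 ^ k / 8) (fun k => D / 2 ^ k / α) p) {k : ℕ}
    (hk : α * dist x y < D / 2 ^ k) : dyadicCenters D α p k x = dyadicCenters D α p k y := by
  refine (sampleCenter_eq_of_isPadding ((mem_filter.1 hx).2 (Fin.clamp k K)) ?_).symm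
  rw [le_div_iff₀ hα, mul_comm]
  exact hk.le.trans (antitone_div_two_pow hD (min_le_left k K))

theorem exists_ultrametric_on_paddedSet {ε : ℝ} (hD : 0 < D)
    (hdiam : ∀ x y : X, dist x y ≤ D) (hsep : ∀ x y : X, x ≠ y → ε ≤ dist x y)
    (hK : D / 2 ^ K < ε) (hα : 16 * N ≤ α) (hN : 0 < N) (hp : p ∈ samples K N) :
    ∃ ρ : X → X → ℝ,
      IsUltrametricOn ↑(paddedSet (fun k => D / 2 ^ k / 8) (fun k => D / 2 ^ k / α) p) ρ ∧
      ∀ x ∈ paddedSet (fun k => D / 2 ^ k / 8) (fun k => D / 2 ^ k / α) p,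
      ∀ y ∈ paddedSet (fun k => D / 2 ^ k / 8) (fun k => D / 2 ^ k / α) p,
        dist x y ≤ ρ x y ∧ ρ x y ≤ α * dist x y := by
  have hα0 : 0 < α := lt_of_lt_of_le (by positivity) hα
  have hsplit : ∀ x y : X, x ≠ y → ∃ k, dyadicCenters D α p k x ≠ dyadicCenters D α p k y :=
    fun x y hxy => ⟨K, fun h => hxy (eq_of_dyadicCenters_eq hD.le hN hα hp hsep hK le_rfl h)⟩
  refine ⟨levelUltrametric (dyadicCenters D α p) (D / 2 ^ ·),
    isUltrametricOn_levelUltrametric (fun k => by positivity) (antitone_div_two_pow hD.le)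
      hsplit _, fun x hx y _ => ?_⟩
  rcases eq_or_ne x y with rfl | hxy
  · simp [levelUltrametric_self]
  refine ⟨dist_le_levelUltrametric (hsplit x y hxy) (by simpa using hdiam x y) fun k h => ?_,
    levelUltrametric_le_mul_dist (hsplit x y hxy) fun k hk =>
      dyadicCenters_eq_of_mem_paddedSet hD.le hα0 hx hk⟩
  have hkK : k < K :=
    not_le.1 fun hk => hxy (eq_of_dyadicCenters_eq hD.le hN hα hp hsep hK hk h)
  have := dist_le_of_dyadicCenters_eq hD.le hN hα hp h
  rwa [show (Fin.clamp k K : ℕ) = k from min_eq_left hkK.le, div_div, ← pow_succ] at this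

end Construction

theorem exists_ultrametric_subset_rpow_le_sum_rpow {X : Type} [MetricSpace X] [Fintype X]
    [Nonempty X] {w : X → ℝ} (hw : ∀ x, 0 < w x) {α : ℝ} {N : ℕ} (hN : 0 < N)
    (hα : 16 * N ≤ α) :
    ∃ (Y : Finset X) (ρ : X → X → ℝ), IsUltrametricOn (↑Y) ρ ∧
      (∀ x ∈ Y, ∀ y ∈ Y, dist x y ≤ ρ x y ∧ ρ x y ≤ α * dist x y) ∧
      (∑ x, w x) ^ (1 - (N : ℝ)⁻¹) ≤ ∑ y ∈ Y, w y ^ (1 - (N : ℝ)⁻¹) := by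
  classical
  obtain ⟨D, hD, hdiam⟩ := exists_pos_forall_dist_le X
  obtain ⟨ε, hε, hsep⟩ := exists_pos_forall_le_dist X
  obtain ⟨K, hK⟩ : ∃ K : ℕ, D / 2 ^ K < ε := by
    obtain ⟨K, hK⟩ := pow_unbounded_of_one_lt (D / ε) one_lt_two
    exact ⟨K, by rwa [div_lt_iff₀ (by positivity), mul_comm, ← div_lt_iff₀ hε]⟩
  have hα0 : 0 < α := lt_of_lt_of_le (by positivity) hα
  have hnest : ∀ k : ℕ, D / 2 ^ (k + 1) / 8 + 2 * N * (D / 2 ^ (k + 1) / α) ≤ D / 2 ^ k / 8 := by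
    intro k
    have := add_two_mul_mul_div_le hN hα (by positivity : 0 ≤ D / 2 ^ (k + 1))
    rw [pow_succ, ← div_div] at *
    linarith
  obtain ⟨p, hp, hY⟩ := exists_mem_samples_rpow_le_sum_paddedSet (K := K)
    (q := fun k => D / 2 ^ k / 8) (t := fun k => D / 2 ^ k / α) hw hN (fun k => by positivity)
    (fun k => by positivity) hnest
    (ballWeight_eq_self hsep (by positivity)
      ((div_le_self (by positivity) (by norm_num)).trans_lt hK))
  obtain ⟨ρ, hρ, hbounds⟩ := exists_ultrametric_on_paddedSet hD hdiam hsep hK hα hN hp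
  exact ⟨_, ρ, hρ, hbounds, hY⟩

theorem exists_singleton_ultrametric {X : Type} [PseudoMetricSpace X] (x : X) (α : ℝ) :
    ∃ ρ : X → X → ℝ, IsUltrametricOn (↑({x} : Finset X)) ρ ∧
      ∀ y ∈ ({x} : Finset X), ∀ z ∈ ({x} : Finset X), dist y z ≤ ρ y z ∧ ρ y z ≤ α * dist y z :=
  ⟨fun _ _ => 0, ⟨fun _ _ => rfl, fun y hy z hz hyz =>
    absurd ((mem_singleton.1 (mem_coe.1 hy)).trans (mem_singleton.1 (mem_coe.1 hz)).symm) hyz,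
    fun _ _ _ _ => rfl, fun _ _ _ _ _ _ => by simp⟩,
    fun y hy z hz => by simp_all⟩

theorem inv_natFloor_div_le {α : ℝ} (hα : 32 ≤ α) : ((⌊α / 16⌋₊ : ℕ) : ℝ)⁻¹ ≤ 32 / α := by
  rw [← inv_div α 32]
  have := Nat.lt_floor_add_one (α / 16)
  exact inv_anti₀ (by positivity) (by linarith : α / 32 ≤ (⌊α / 16⌋₊ : ℝ))

theorem half_le_log_add_log_log {α Φ : ℝ} (hα : 2 < α) (hΦ : 1 ≤ Φ) :
    1 / 2 ≤ Real.log α + Real.log (Real.log (4 * Φ)) := by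
  have hlog2 := Real.log_two_gt_d9
  have hlogα : Real.log 2 < Real.log α := Real.log_lt_log two_pos hα
  have hlog4 : 1 ≤ Real.log (4 * Φ) := by
    have h4 : Real.log 4 = 2 * Real.log 2 := by
      rw [show (4 : ℝ) = 2 ^ 2 by norm_num, Real.log_pow, Nat.cast_ofNat]
    linarith [Real.log_le_log (by norm_num : (0 : ℝ) < 4) (by linarith : 4 ≤ 4 * Φ)]
  have := Real.log_nonneg hlog4
  linarith

end WeightedRamsey

open WeightedRamsey

/-- The weighted metric Ramsey theorem for spaces of aspect ratio at most `Φ`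
(i.e. `dist x y ≤ Φ · dist x' y'` for all pairs of distinct points): with
`ψ = max(0, 1 - C·(log α + log log(4Φ))/α)`, some subset `Y` which is `α`-equivalent
to an ultrametric satisfies `Σ_{y∈Y} w(y)^ψ ≥ (Σ_{x∈X} w(x))^ψ`. -/
theorem weighted_ramsey_bounded_aspect_ratio :
    ∃ C : ℝ, 0 < C ∧
      ∀ (α Φ : ℝ), 2 < α → 1 ≤ Φ →
        ∀ (X : Type) [MetricSpace X] [Fintype X], 2 ≤ Fintype.card X →
          (∀ x y x' y' : X, x ≠ y → x' ≠ y' → dist x y ≤ Φ * dist x' y') →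
          ∀ w : X → ℝ, (∀ x, 0 < w x) →
            ∃ (Y : Finset X) (ρ : X → X → ℝ),
              IsUltrametricOn (↑Y) ρ ∧
              (∀ x ∈ Y, ∀ y ∈ Y, dist x y ≤ ρ x y ∧ ρ x y ≤ α * dist x y) ∧
              (∑ x, w x) ^
                  (max 0 (1 - C * (Real.log α + Real.log (Real.log (4 * Φ))) / α)) ≤
                ∑ y ∈ Y, w y ^
                  (max 0 (1 - C * (Real.log α + Real.log (Real.log (4 * Φ))) / α)) := by
  refine ⟨64, by norm_num, fun α Φ hα hΦ X _ _ hcard _ w hw => ?_⟩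
  have hX : Nonempty X := Fintype.card_pos_iff.1 (by omega)
  have hS := half_le_log_add_log_log hα hΦ
  set S := Real.log α + Real.log (Real.log (4 * Φ))
  rcases le_or_gt (1 - 64 * S / α) 0 with hE | hE
  · obtain ⟨ρ, hρ, hbounds⟩ := exists_singleton_ultrametric hX.some α
    exact ⟨{hX.some}, ρ, hρ, hbounds, by simp [max_eq_left hE]⟩
  have hα32 : 32 ≤ α := by
    rw [sub_pos, div_lt_one (by linarith)] at hE
    linarith
  have hψ : 1 - 64 * S / α ≤ 1 - ((⌊α / 16⌋₊ : ℕ) : ℝ)⁻¹ := by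
    linarith [inv_natFloor_div_le hα32, div_le_div_of_nonneg_right (by linarith : 32 ≤ 64 * S)
      (by linarith : 0 ≤ α)]
  obtain ⟨Y, ρ, hρ, hbounds, hsum⟩ := exists_ultrametric_subset_rpow_le_sum_rpow hw
    (Nat.floor_pos.2 (by linarith : 1 ≤ α / 16))
    (by linarith [Nat.floor_le (by positivity : 0 ≤ α / 16)] : 16 * (⌊α / 16⌋₊ : ℝ) ≤ α)
  refine ⟨Y, ρ, hρ, hbounds, ?_⟩
  rw [max_eq_right hE.le]
  exact rpow_le_sum_rpow_of_exponent_le (sum_pos (fun x _ => hw x) univ_nonempty) (fun y _ => hw y)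
    (fun y _ => single_le_sum (fun x _ => (hw x).le) (mem_univ y)) hψ hsum
end

section
/- Let α > 2 be real and let (M,d) be a finite metric space with n ≥ 4 points. Set t = max(1, ⌈log Φ(M) / log(α/2)⌉), where Φ(M) is the aspect ratio of M. Then there exists a subset B ⊆ M with |B| ≥ (n/2)^(1/t) and a real r > 0 such that r ≤ d(x,y) ≤ α·r for all distinct x,y ∈ B. -/
/-- The aspect ratio of a finite metric space: its diameter divided by the minimal
distance between distinct points. -/
noncomputable def aspectRatio (M : Type) [MetricSpace M] : ℝ :=
  Metric.diam (Set.univ : Set M) / sInf {r : ℝ | ∃ x y : M, x ≠ y ∧ dist x y = r}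

lemma key (α : ℝ) (hα : 2 < α) {M : Type} [MetricSpace M] (t : ℕ) (ht : 1 ≤ t) :
    ∀ (S : Finset M) (δ : ℝ), 0 < δ →
      (∀ x ∈ S, ∀ y ∈ S, x ≠ y → δ ≤ dist x y) →
      (∀ x ∈ S, ∀ y ∈ S, dist x y ≤ δ * (α / 2) ^ t) →
      ∃ B r, B ⊆ S ∧ 0 < r ∧ S.card ≤ 2 * B.card ^ t ∧
        ∀ x ∈ B, ∀ y ∈ B, x ≠ y → r ≤ dist x y ∧ dist x y ≤ α * r := by
  induction t with
  | zero => omega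
  | succ t ih =>
    intro S δ hδ hlow hhigh
    classical
    rcases Nat.eq_zero_or_pos t with rfl | htpos
    · -- base case : exponent 1
      refine ⟨S, δ, subset_rfl, hδ, by rw [pow_one]; omega, ?_⟩
      intro x hx y hy hxy
      refine ⟨hlow x hx y hy hxy, ?_⟩
      have := hhigh x hx y hy
      have : dist x y ≤ δ * (α / 2) ^ 1 := this
      nlinarith
    · -- step case
      have hβ : (1 : ℝ) < α / 2 := by linarith
      have hβpos : (0 : ℝ) < α / 2 := by linarith
      set s : ℝ := δ * (α / 2) ^ t / 2 with hs_def
      have hspos : 0 < s := by positivity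
      have hαs : α * s = δ * (α / 2) ^ (t + 1) := by
        rw [hs_def]; ring
      -- handle tiny S
      by_cases hS2 : S.card ≤ 2
      · rcases S.eq_empty_or_nonempty with rfl | ⟨x, hx⟩
        · exact ⟨∅, δ, subset_rfl, hδ, by simp, by simp⟩
        · refine ⟨{x}, δ, by simpa using hx, hδ, ?_, ?_⟩
          · simpa using hS2
          · intro a ha b hb hab
            simp only [Finset.mem_singleton] at ha hb
            exact absurd (ha.trans hb.symm) hab
      push_neg at hS2
      -- m : least with S.card ≤ 2 * m ^ (t+1)
      have hex : ∃ m : ℕ, S.card ≤ 2 * m ^ (t + 1) := ⟨S.card, by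
        have : S.card ≤ S.card ^ (t + 1) := Nat.le_self_pow (by omega) _
        omega⟩
      set m := Nat.find hex with hm_def
      have hmle : S.card ≤ 2 * m ^ (t + 1) := Nat.find_spec hex
      have hm2 : 2 ≤ m := by
        rcases Nat.lt_or_ge m 2 with h | h
        · have h1 : m ^ (t + 1) ≤ 1 ^ (t + 1) :=
            Nat.pow_le_pow_left (by omega) _
          rw [one_pow] at h1
          omega
        · exact h
      have hmin : ¬ S.card ≤ 2 * (m - 1) ^ (t + 1) := Nat.find_min hex (by omega)
      push_neg at hmin
      -- maximal s-separated subset N of S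
      set 𝒩 := S.powerset.filter
        (fun N => ∀ x ∈ N, ∀ y ∈ N, x ≠ y → s ≤ dist x y) with h𝒩
      have hempty : (∅ : Finset M) ∈ 𝒩 := by simp [h𝒩]
      obtain ⟨N, hN𝒩, hNmax⟩ := Finset.exists_max_image 𝒩 Finset.card ⟨∅, hempty⟩
      simp only [h𝒩, Finset.mem_filter, Finset.mem_powerset] at hN𝒩
      obtain ⟨hNS, hNsep⟩ := hN𝒩
      by_cases hNcard : m ≤ N.card
      · -- case 1: take m points of N
        obtain ⟨B, hBN, hBcard⟩ := Finset.exists_subset_card_eq hNcard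
        refine ⟨B, s, hBN.trans hNS, hspos, by rw [hBcard]; exact hmle, ?_⟩
        intro x hx y hy hxy
        refine ⟨hNsep x (hBN hx) y (hBN hy) hxy, ?_⟩
        rw [hαs]
        exact hhigh x (hNS (hBN hx)) y (hNS (hBN hy))
      push_neg at hNcard
      -- every point of S is within < s of some point of N
      have hcover : ∀ x ∈ S, ∃ p ∈ N, dist x p < s := by
        intro x hx
        by_contra h
        push_neg at h
        have hxN : x ∉ N := by
          intro hxN
          have := h x hxN
          simp at this
          linarith
        have hins : insert x N ∈ 𝒩 := by
          simp only [h𝒩, Finset.mem_filter, Finset.mem_powerset]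
          refine ⟨Finset.insert_subset hx hNS, ?_⟩
          intro a ha b hb hab
          simp only [Finset.mem_insert] at ha hb
          rcases ha with rfl | ha <;> rcases hb with rfl | hb
          · exact absurd rfl hab
          · exact h b hb
          · rw [dist_comm]; exact h a ha
          · exact hNsep a ha b hb hab
        have := hNmax _ hins
        rw [Finset.card_insert_of_notMem hxN] at this
        omega
      -- pigeonhole
      have hsub : S ⊆ N.biUnion (fun p => S.filter (fun x => dist x p < s)) := by
        intro x hx
        obtain ⟨p, hp, hdp⟩ := hcover x hx
        exact Finset.mem_biUnion.2 ⟨p, hp, Finset.mem_filter.2 ⟨hx, hdp⟩⟩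
      have hNne : N.Nonempty := by
        obtain ⟨x, hx⟩ := Finset.card_pos.1 (by omega : 0 < S.card)
        obtain ⟨p, hp, _⟩ := hcover x hx
        exact ⟨p, hp⟩
      obtain ⟨p, hpN, hpmax⟩ := Finset.exists_max_image N
        (fun p => (S.filter (fun x => dist x p < s)).card) hNne
      have hpigeon : S.card ≤ N.card * (S.filter (fun x => dist x p < s)).card := by
        calc S.card ≤ (N.biUnion (fun p => S.filter (fun x => dist x p < s))).card :=
              Finset.card_le_card hsub
          _ ≤ ∑ q ∈ N, (S.filter (fun x => dist x q < s)).card :=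
              Finset.card_biUnion_le
          _ ≤ N.card * (S.filter (fun x => dist x p < s)).card := by
              rw [← smul_eq_mul]
              exact Finset.sum_le_card_nsmul _ _ _ (fun q hq => hpmax q hq)
      set S' := S.filter (fun x => dist x p < s) with hS'
      have hS'S : S' ⊆ S := Finset.filter_subset _ _
      -- apply IH to S'
      obtain ⟨B, r, hBS', hr, hBcard, hBsep⟩ := ih htpos S' δ hδ
        (fun x hx y hy hxy => hlow x (hS'S hx) y (hS'S hy) hxy)
        (by
          intro x hx y hy
          rw [hS', Finset.mem_filter] at hx hy
          have h1 : dist x y ≤ dist x p + dist p y := dist_triangle x p y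
          have h2 : dist p y < s := by rw [dist_comm]; exact hy.2
          have h3 : s + s = δ * (α / 2) ^ t := by rw [hs_def]; ring
          linarith [hx.2])
      refine ⟨B, r, hBS'.trans hS'S, hr, ?_, hBsep⟩
      -- cardinality count
      have hNm : N.card ≤ m - 1 := by omega
      have h1 : 2 * (m - 1) ^ (t + 1) < (m - 1) * (2 * B.card ^ t) := by
        calc 2 * (m - 1) ^ (t + 1) < S.card := hmin
          _ ≤ N.card * S'.card := hpigeon
          _ ≤ (m - 1) * (2 * B.card ^ t) :=
              Nat.mul_le_mul hNm hBcard
      have h2 : (m - 1) ^ t < B.card ^ t := by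
        have hm1 : 1 ≤ m - 1 := by omega
        have : (m - 1) * (2 * (m - 1) ^ t) < (m - 1) * (2 * B.card ^ t) := by
          calc (m - 1) * (2 * (m - 1) ^ t) = 2 * (m - 1) ^ (t + 1) := by ring
            _ < (m - 1) * (2 * B.card ^ t) := h1
        have := Nat.lt_of_mul_lt_mul_left this
        omega
      have hmB : m - 1 < B.card := by
        by_contra h
        push_neg at h
        exact absurd (Nat.pow_le_pow_left h t) (by omega)
      calc S.card ≤ N.card * S'.card := hpigeon
        _ ≤ B.card * (2 * B.card ^ t) := Nat.mul_le_mul (by omega) hBcard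
        _ = 2 * B.card ^ (t + 1) := by ring

/-- Every `n`-point metric space (`n ≥ 4`) contains a subset of size at least
`(n/2)^(1/t)`, with `t = max(1, ⌈log Φ(M)/log(α/2)⌉)`, which is `α`-equivalent to an
equilateral space. -/
theorem equilateral_subset_aspect_ratio
    (α : ℝ) (hα : 2 < α) (M : Type) [MetricSpace M] [Fintype M]
    (hn : 4 ≤ Fintype.card M) :
    ∃ (B : Finset M) (r : ℝ), 0 < r ∧
      ((Fintype.card M : ℝ) / 2) ^
          ((1 : ℝ) / ((max 1 ⌈Real.log (aspectRatio M) / Real.log (α / 2)⌉₊ : ℕ) : ℝ)) ≤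
        (B.card : ℝ) ∧
      ∀ x ∈ B, ∀ y ∈ B, x ≠ y → r ≤ dist x y ∧ dist x y ≤ α * r := by
  classical
  set t : ℕ := max 1 ⌈Real.log (aspectRatio M) / Real.log (α / 2)⌉₊ with ht_def
  have ht1 : 1 ≤ t := le_max_left _ _
  set D : Set ℝ := {r : ℝ | ∃ x y : M, x ≠ y ∧ dist x y = r} with hD_def
  have hDfin : D.Finite := by
    apply Set.Finite.subset (Set.finite_range (fun p : M × M => dist p.1 p.2))
    rintro r ⟨x, y, _, hr⟩
    exact ⟨(x, y), hr⟩
  have hDne : D.Nonempty := by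
    obtain ⟨x, y, hxy⟩ := Fintype.exists_pair_of_one_lt_card (α := M) (by omega)
    exact ⟨dist x y, x, y, hxy, rfl⟩
  have hDbdd : BddBelow D := ⟨0, by rintro r ⟨x, y, _, hr⟩; rw [← hr]; exact dist_nonneg⟩
  set δ : ℝ := sInf D with hδ_def
  have hδmem : δ ∈ D := hDne.csInf_mem hDfin
  have hδ : 0 < δ := by
    obtain ⟨x, y, hxy, hr⟩ := hδmem
    rw [← hr]
    exact dist_pos.2 hxy
  have hlow : ∀ x y : M, x ≠ y → δ ≤ dist x y := fun x y hxy =>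
    csInf_le hDbdd ⟨x, y, hxy, rfl⟩
  have hβ : (1 : ℝ) < α / 2 := by linarith
  have hΦ : aspectRatio M = Metric.diam (Set.univ : Set M) / δ := rfl
  have hΦ1 : aspectRatio M ≤ (α / 2) ^ t := by
    rcases le_or_gt (aspectRatio M) 1 with h | h
    · exact h.trans (one_le_pow₀ hβ.le)
    · have hlogβ : 0 < Real.log (α / 2) := Real.log_pos hβ
      have h1 : Real.log (aspectRatio M) / Real.log (α / 2) ≤ (t : ℝ) := by
        calc Real.log (aspectRatio M) / Real.log (α / 2)
            ≤ (⌈Real.log (aspectRatio M) / Real.log (α / 2)⌉₊ : ℝ) := Nat.le_ceil _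
          _ ≤ (t : ℝ) := Nat.cast_le.2 (le_max_right _ _)
      have h2 : Real.log (aspectRatio M) ≤ (t : ℝ) * Real.log (α / 2) := by
        rw [div_le_iff₀ hlogβ] at h1
        exact h1
      rw [← Real.log_pow] at h2
      exact (Real.log_le_log_iff (by linarith) (by positivity)).1 h2
  have hdiam : Metric.diam (Set.univ : Set M) ≤ δ * (α / 2) ^ t := by
    have := (div_le_iff₀ hδ).1 (hΦ ▸ hΦ1)
    linarith
  have hhigh : ∀ x ∈ (Finset.univ : Finset M), ∀ y ∈ (Finset.univ : Finset M),
      dist x y ≤ δ * (α / 2) ^ t := by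
    intro x _ y _
    calc dist x y ≤ Metric.diam (Set.univ : Set M) :=
          Metric.dist_le_diam_of_mem (Set.finite_univ.isBounded) trivial trivial
      _ ≤ δ * (α / 2) ^ t := hdiam
  obtain ⟨B, r, _, hr, hcard, hsep⟩ := key α hα t ht1 Finset.univ δ hδ
    (fun x _ y _ hxy => hlow x y hxy) hhigh
  refine ⟨B, r, hr, ?_, hsep⟩
  have hcard' : (Fintype.card M : ℝ) / 2 ≤ (B.card : ℝ) ^ (t : ℕ) := by
    rw [Finset.card_univ] at hcard
    have : (Fintype.card M : ℝ) ≤ 2 * (B.card : ℝ) ^ (t : ℕ) := by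
      exact_mod_cast hcard
    linarith
  have htpos : (0 : ℝ) < (t : ℝ) := by exact_mod_cast ht1
  have hb0 : (0 : ℝ) ≤ (B.card : ℝ) := Nat.cast_nonneg _
  calc ((Fintype.card M : ℝ) / 2) ^ ((1 : ℝ) / (t : ℝ))
      ≤ ((B.card : ℝ) ^ (t : ℕ)) ^ ((1 : ℝ) / (t : ℝ)) :=
        Real.rpow_le_rpow (by positivity) hcard' (by positivity)
    _ = (B.card : ℝ) := by
        rw [← Real.rpow_natCast (B.card : ℝ) t, ← Real.rpow_mul hb0,
          mul_one_div, div_self htpos.ne', Real.rpow_one]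
end

section
/- Let α > 2 and s ≥ 2 be real numbers, let t ≥ 1 be an integer, and let (M,d) be a finite metric space with n ≥ 2 points. Then at least one of the following holds: (1) there exists a subset N ⊆ M with |N| ≥ s and a real r > 0 such that r ≤ d(x,y) ≤ α·r for all distinct x,y ∈ N; or (2) there exists a subset N ⊆ M with |N| ≥ n/s^t and diam(N) < (2/α)^t·diam(M). -/
open Finset

/-- A finite set whose pairwise distances are strictly below `c > 0` has diameter
strictly below `c`. -/
lemma finset_diam_lt {M : Type*} [MetricSpace M] (N : Finset M) {c : ℝ} (hc : 0 < c)
    (h : ∀ x ∈ N, ∀ y ∈ N, dist x y < c) : Metric.diam (↑N : Set M) < c := by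
  rcases N.eq_empty_or_nonempty with rfl | hne
  · simpa using hc
  · obtain ⟨p, hp, hmax⟩ := (N ×ˢ N).exists_max_image (fun p => dist p.1 p.2)
      (hne.product hne)
    have hlt : dist p.1 p.2 < c := h p.1 (mem_product.1 hp).1 p.2 (mem_product.1 hp).2
    refine lt_of_le_of_lt ?_ hlt
    refine Metric.diam_le_of_forall_dist_le dist_nonneg ?_
    intro x hx y hy
    exact hmax (x, y) (mem_product.2 ⟨hx, hy⟩)

/-- One step of the argument: either `N` contains an almost-equilateral subset of
size at least `s`, or it contains a subset of relative size `1/s` whose diameter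
shrinks by a factor `2/α`. -/
lemma equilateral_step {M : Type} [MetricSpace M] [Fintype M] (α s : ℝ)
    (hα : 2 < α) (hs : 2 ≤ s) (N : Finset M) (hN : 2 ≤ N.card) :
    (∃ B : Finset M, s ≤ (B.card : ℝ) ∧ ∃ r : ℝ, 0 < r ∧
        ∀ x ∈ B, ∀ y ∈ B, x ≠ y → r ≤ dist x y ∧ dist x y ≤ α * r) ∨
    (∃ N' : Finset M, N' ⊆ N ∧ (N.card : ℝ) / s ≤ (N'.card : ℝ) ∧
        Metric.diam (↑N' : Set M) < (2 / α) * Metric.diam (↑N : Set M)) := by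
  classical
  have hα0 : (0:ℝ) < α := lt_trans two_pos hα
  set d0 : ℝ := Metric.diam (↑N : Set M) with hd0
  have hbdd : Bornology.IsBounded (↑N : Set M) := N.finite_toSet.isBounded
  -- d0 > 0
  obtain ⟨x0, hx0, y0, hy0, hxy0⟩ := Finset.one_lt_card.1 (lt_of_lt_of_le one_lt_two hN)
  have hd0pos : 0 < d0 := lt_of_lt_of_le (dist_pos.2 hxy0)
    (Metric.dist_le_diam_of_mem hbdd hx0 hy0)
  set r : ℝ := d0 / α with hr
  have hrpos : 0 < r := div_pos hd0pos hα0
  -- maximal r-separated subset of N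
  set P : Finset M → Prop := fun B => B ⊆ N ∧ ∀ x ∈ B, ∀ y ∈ B, x ≠ y → r ≤ dist x y
    with hP
  have hcand : ((N.powerset).filter P).Nonempty := by
    refine ⟨∅, ?_⟩
    simp [hP]
  obtain ⟨B, hBmem, hBmax⟩ := ((N.powerset).filter P).exists_max_image Finset.card hcand
  rw [Finset.mem_filter, Finset.mem_powerset] at hBmem
  obtain ⟨hBN, hBsep⟩ := hBmem.2
  -- covering property
  have hcover : ∀ x ∈ N, ∃ b ∈ B, dist x b < r := by
    intro x hx
    by_contra hcon
    push_neg at hcon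
    have hxB : x ∉ B := fun hxB => absurd (hcon x hxB) (by simpa using hrpos)
    have hins : insert x B ∈ (N.powerset).filter P := by
      rw [Finset.mem_filter, Finset.mem_powerset]
      refine ⟨Finset.insert_subset hx hBN, Finset.insert_subset hx hBN, ?_⟩
      intro u hu v hv huv
      rcases Finset.mem_insert.1 hu with hux | hu'
      · rcases Finset.mem_insert.1 hv with hvx | hv'
        · exact absurd (hux.trans hvx.symm) huv
        · rw [hux]; exact hcon v hv'
      · rcases Finset.mem_insert.1 hv with hvx | hv'
        · rw [hvx, dist_comm]; exact hcon u hu'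
        · exact hBsep u hu' v hv' huv
    have := hBmax _ hins
    rw [Finset.card_insert_of_notMem hxB] at this
    omega
  by_cases hcase : s ≤ (B.card : ℝ)
  · -- equilateral case
    left
    refine ⟨B, hcase, r, hrpos, ?_⟩
    intro x hx y hy hxy
    refine ⟨hBsep x hx y hy hxy, ?_⟩
    have : dist x y ≤ d0 := Metric.dist_le_diam_of_mem hbdd (hBN hx) (hBN hy)
    calc dist x y ≤ d0 := this
      _ = α * r := by rw [hr]; field_simp
  · -- small-diameter case
    right
    push_neg at hcase
    set C : M → Finset M := fun b => N.filter (fun x => dist x b < r) with hC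
    have hNsub : N ⊆ B.biUnion C := by
      intro x hx
      obtain ⟨b, hb, hdb⟩ := hcover x hx
      exact Finset.mem_biUnion.2 ⟨b, hb, Finset.mem_filter.2 ⟨hx, hdb⟩⟩
    have hBne : B.Nonempty := by
      obtain ⟨b, hb, _⟩ := hcover x0 hx0
      exact ⟨b, hb⟩
    obtain ⟨b, hbB, hbmax⟩ := B.exists_max_image (fun b => (C b).card) hBne
    have hcount : N.card ≤ B.card * (C b).card := by
      calc N.card ≤ (B.biUnion C).card := Finset.card_le_card hNsub
        _ ≤ ∑ c ∈ B, (C c).card := Finset.card_biUnion_le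
        _ ≤ B.card * (C b).card := by
            simpa [smul_eq_mul] using Finset.sum_le_card_nsmul B (fun c => (C c).card)
              ((C b).card) (fun c hc => hbmax c hc)
    refine ⟨C b, Finset.filter_subset _ _, ?_, ?_⟩
    · -- size bound
      have hs0 : (0:ℝ) < s := lt_of_lt_of_le two_pos hs
      rw [div_le_iff₀ hs0]
      have h1 : (N.card : ℝ) ≤ (B.card : ℝ) * (C b).card := by
        exact_mod_cast hcount
      refine h1.trans ?_
      rw [mul_comm ((C b).card : ℝ) s]
      exact mul_le_mul_of_nonneg_right (le_of_lt hcase) (Nat.cast_nonneg _)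
    · -- diameter bound
      have h2r : (2 / α) * d0 = 2 * r := by rw [hr]; ring
      rw [h2r]
      refine finset_diam_lt _ (by positivity) ?_
      intro x hx y hy
      have hxr : dist x b < r := (Finset.mem_filter.1 hx).2
      have hyr : dist y b < r := (Finset.mem_filter.1 hy).2
      calc dist x y ≤ dist x b + dist b y := dist_triangle x b y
        _ = dist x b + dist y b := by rw [dist_comm b y]
        _ < r + r := add_lt_add hxr hyr
        _ = 2 * r := by ring

/-- Either a finite metric space contains an almost-equilateral subset of size at
least `s`, or it contains a subset of size at least `n/s^t` whose diameter is less
than `(2/α)^t` times the diameter of the whole space. -/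
theorem equilateral_or_small_diameter
    (α s : ℝ) (t : ℕ) (hα : 2 < α) (hs : 2 ≤ s) (ht : 1 ≤ t)
    (M : Type) [MetricSpace M] [Fintype M] (hn : 2 ≤ Fintype.card M) :
    (∃ N : Finset M, s ≤ (N.card : ℝ) ∧ ∃ r : ℝ, 0 < r ∧
        ∀ x ∈ N, ∀ y ∈ N, x ≠ y → r ≤ dist x y ∧ dist x y ≤ α * r) ∨
    (∃ N : Finset M, (Fintype.card M : ℝ) / s ^ t ≤ (N.card : ℝ) ∧
        Metric.diam (↑N : Set M) < (2 / α) ^ t * Metric.diam (Set.univ : Set M)) := by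
  have hα0 : (0:ℝ) < α := lt_trans two_pos hα
  have hs0 : (0:ℝ) < s := lt_of_lt_of_le two_pos hs
  have hs1 : (1:ℝ) ≤ s := le_trans one_le_two hs
  have hq0 : (0:ℝ) < 2 / α := by positivity
  set D : ℝ := Metric.diam (Set.univ : Set M) with hD
  have hDpos : 0 < D := by
    obtain ⟨x, y, hxy⟩ := Fintype.exists_pair_of_one_lt_card (lt_of_lt_of_le one_lt_two hn)
    exact lt_of_lt_of_le (dist_pos.2 hxy)
      (Metric.dist_le_diam_of_mem (Set.finite_univ.isBounded) (Set.mem_univ x)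
        (Set.mem_univ y))
  have hunivcard : (Finset.univ : Finset M).card = Fintype.card M := Finset.card_univ
  induction t with
  | zero => omega
  | succ k ih =>
    rcases Nat.eq_zero_or_pos k with rfl | hk
    · -- base case t = 1
      have h2 : 2 ≤ (Finset.univ : Finset M).card := by rwa [hunivcard]
      rcases equilateral_step α s hα hs (Finset.univ : Finset M) h2 with h | ⟨N', _, hcard, hdiam⟩
      · exact Or.inl h
      · right
        refine ⟨N', ?_, ?_⟩
        · rw [zero_add, pow_one, ← hunivcard]; exact hcard
        · rw [zero_add, pow_one, hD]
          rwa [Finset.coe_univ] at hdiam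
    · -- inductive step
      rcases ih hk with h | ⟨N, hcard, hdiam⟩
      · exact Or.inl h
      by_cases hN2 : 2 ≤ N.card
      · rcases equilateral_step α s hα hs N hN2 with h | ⟨N', _, hcard', hdiam'⟩
        · exact Or.inl h
        right
        refine ⟨N', ?_, ?_⟩
        · have h1 : (Fintype.card M : ℝ) / s ^ (k + 1) = ((Fintype.card M : ℝ) / s ^ k) / s := by
            rw [div_div, pow_succ]
          rw [h1]
          refine le_trans (div_le_div_of_nonneg_right hcard hs0.le) hcard'
        · refine lt_of_lt_of_le hdiam' ?_
          rw [pow_succ, mul_comm ((2/α)^k) (2/α), mul_assoc]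
          exact mul_le_mul_of_nonneg_left (le_of_lt hdiam) (le_of_lt hq0)
      · -- N has at most one point; reuse it
        right
        push_neg at hN2
        refine ⟨N, ?_, ?_⟩
        · refine le_trans ?_ hcard
          refine div_le_div_of_nonneg_left (Nat.cast_nonneg _) (by positivity) ?_
          calc s ^ k ≤ s ^ k * s := le_mul_of_one_le_right (by positivity) hs1
            _ = s ^ (k + 1) := (pow_succ s k).symm
        · have hsub : (↑N : Set M).Subsingleton := by
            intro a ha b hb
            have := Finset.card_le_one.1 (Nat.lt_succ_iff.1 hN2)
            exact this a ha b hb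
          rw [Metric.diam_subsingleton hsub]
          positivity
end
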